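/- arXiv:math/0202040 — 10 statements merged into one kernel-verified Lean document; each statement's English description precedes it below -/
import Mathlib

section
/- Let K be a field of characteristic 0 or of characteristic greater than 3, and let (U,·,ω) be a 3-Lie-Poisson algebra over K. Then (U,·,ω) is strong, i.e. for all u_1,...,u_6 ∈ U one has Σ_{i=1}^{4} (−1)^i ω(u_1,u_2,v_i)·ω(v_1,...,v̂_i,...,v_4) = 0, where (v_1,v_2,v_3,v_4) = (u_3,u_4,u_5,u_6) and v̂_i means omission of the i-th argument. -/
set_option linter.unusedSectionVars false
set_option maxHeartbeats 1000000


open Finset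

/-- `ω` is an `m`-linear map over `K`. -/
def IsMultilinear (K : Type*) [Field K] {U : Type*} [CommRing U] [Algebra K U] {m : ℕ}
    (ω : (Fin m → U) → U) : Prop :=
  ∀ (v : Fin m → U) (i : Fin m) (c : K) (x y : U),
    ω (Function.update v i (c • x + y)) =
      c • ω (Function.update v i x) + ω (Function.update v i y)

/-- `ω` is alternating: it vanishes whenever two arguments coincide. -/
def IsAlternating {U : Type*} [CommRing U] {m : ℕ} (ω : (Fin m → U) → U) : Prop :=
  ∀ (v : Fin m → U) (i j : Fin m), i ≠ j → v i = v j → ω v = 0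

/-- Fundamental Identity of type I for an `(n+1)`-ary multiplication. -/
def FundamentalIdentityI {U : Type*} [CommRing U] {n : ℕ} (ω : (Fin (n + 1) → U) → U) : Prop :=
  ∀ (u : Fin n → U) (v : Fin (n + 1) → U),
    ω (Fin.snoc u (ω v)) =
      ∑ i : Fin (n + 1), ω (Function.update v i (ω (Fin.snoc u (v i))))

/-- The Leibniz rule relating an `(n+1)`-ary multiplication with the associative product. -/
def LeibnizRule {U : Type*} [CommRing U] {n : ℕ} (ω : (Fin (n + 1) → U) → U) : Prop :=
  ∀ (a b : U) (u : Fin n → U),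
    ω (Fin.cons (a * b) u) = a * ω (Fin.cons b u) + b * ω (Fin.cons a u)

/-- The polynomial `f^ω(u_1,…,u_n, v_1,…,v_{n+2})` for an `(n+1)`-ary multiplication `ω`:
`Σ_{i=1}^{n+2} (−1)^i ω(u_1,…,u_n,v_i)·ω(v_1,…,v̂_i,…,v_{n+2})`. -/
def fPoly {U : Type*} [CommRing U] {n : ℕ} (ω : (Fin (n + 1) → U) → U)
    (u : Fin n → U) (v : Fin (n + 2) → U) : U :=
  ∑ i : Fin (n + 2), (-1 : U) ^ ((i : ℕ) + 1) * (ω (Fin.snoc u (v i)) * ω (i.removeNth v))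



section Aux

variable (K : Type*) [Field K] {U : Type*} [CommRing U] [Algebra K U]

lemma upd0 (a b c x : U) : Function.update ![a, b, c] 0 x = ![x, b, c] := by
  ext i; fin_cases i <;> simp [Function.update]

lemma upd1 (a b c x : U) : Function.update ![a, b, c] 1 x = ![a, x, c] := by
  ext i; fin_cases i <;> simp [Function.update]

lemma upd2 (a b c x : U) : Function.update ![a, b, c] 2 x = ![a, b, x] := by
  ext i; fin_cases i <;> simp [Function.update]

variable (ω : (Fin 3 → U) → U)

lemma add1 (hml : IsMultilinear K ω) (x y b c : U) :
    ω ![x + y, b, c] = ω ![x, b, c] + ω ![y, b, c] := by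
  have h := hml ![x, b, c] 0 1 x y
  rw [upd0, upd0, upd0, one_smul, one_smul] at h
  exact h

lemma add2 (hml : IsMultilinear K ω) (x y a c : U) :
    ω ![a, x + y, c] = ω ![a, x, c] + ω ![a, y, c] := by
  have h := hml ![a, x, c] 1 1 x y
  rw [upd1, upd1, upd1, one_smul, one_smul] at h
  exact h

lemma add3 (hml : IsMultilinear K ω) (x y a b : U) :
    ω ![a, b, x + y] = ω ![a, b, x] + ω ![a, b, y] := by
  have h := hml ![a, b, x] 2 1 x y
  rw [upd2, upd2, upd2, one_smul, one_smul] at h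
  exact h

variable (hml : IsMultilinear K ω) (halt : IsAlternating ω)

include hml halt in
lemma sw12 (a b c : U) : ω ![a, b, c] = -ω ![b, a, c] := by
  have h0 : ω ![a + b, a + b, c] = 0 := halt ![a + b, a + b, c] 0 1 (by decide) (by simp)
  have ha : ω ![a, a, c] = 0 := halt ![a, a, c] 0 1 (by decide) (by simp)
  have hb : ω ![b, b, c] = 0 := halt ![b, b, c] 0 1 (by decide) (by simp)
  have h1 := add1 K ω hml a b (a + b) c
  have h2 := add2 K ω hml a b a c
  have h3 := add2 K ω hml a b b c
  linear_combination h0 - h1 - h2 - h3 - ha - hb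

include hml halt in
lemma sw23 (a b c : U) : ω ![a, b, c] = -ω ![a, c, b] := by
  have h0 : ω ![a, b + c, b + c] = 0 := halt ![a, b + c, b + c] 1 2 (by decide) (by simp)
  have hb : ω ![a, b, b] = 0 := halt ![a, b, b] 1 2 (by decide) (by simp)
  have hc : ω ![a, c, c] = 0 := halt ![a, c, c] 1 2 (by decide) (by simp)
  have h1 := add2 K ω hml b c a (b + c)
  have h2 := add3 K ω hml b c a b
  have h3 := add3 K ω hml b c a c
  linear_combination h0 - h1 - h2 - h3 - hb - hc

include hml halt in
lemma rot (a b c : U) : ω ![a, b, c] = ω ![c, a, b] := by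
  rw [sw23 K ω hml halt a b c, sw12 K ω hml halt a c b]; ring

include hml halt in
lemma rot' (a b c : U) : ω ![a, b, c] = ω ![b, c, a] :=
  (rot K ω hml halt b c a).symm

include hml halt in
lemma sw13 (a b c : U) : ω ![a, b, c] = -ω ![c, b, a] := by
  rw [rot K ω hml halt a b c, sw23 K ω hml halt c a b]

lemma leib1 (hLeib : LeibnizRule ω) (a b x y : U) :
    ω ![a * b, x, y] = a * ω ![b, x, y] + b * ω ![a, x, y] :=
  hLeib a b ![x, y]

include hml halt in
lemma leib2 (hLeib : LeibnizRule ω) (a b x y : U) :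
    ω ![x, a * b, y] = a * ω ![x, b, y] + b * ω ![x, a, y] := by
  rw [sw12 K ω hml halt x (a * b) y, leib1 ω hLeib a b x y,
    sw12 K ω hml halt x b y, sw12 K ω hml halt x a y]; ring

include hml halt in
lemma leib3 (hLeib : LeibnizRule ω) (a b x y : U) :
    ω ![x, y, a * b] = a * ω ![x, y, b] + b * ω ![x, y, a] := by
  rw [sw13 K ω hml halt x y (a * b), leib1 ω hLeib a b y x,
    sw13 K ω hml halt x y b, sw13 K ω hml halt x y a]; ring

lemma fi3 (hFI : FundamentalIdentityI ω) (p q a b c : U) :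
    ω ![p, q, ω ![a, b, c]] =
      ω ![ω ![p, q, a], b, c] + ω ![a, ω ![p, q, b], c] + ω ![a, b, ω ![p, q, c]] := by
  have hs : ∀ z : U, Fin.snoc ![p, q] z = ![p, q, z] := fun z => by
    ext i; fin_cases i <;> rfl
  have h : ω ![p, q, ω ![a, b, c]] =
      ∑ i : Fin 3, ω (Function.update ![a, b, c] i (ω ![p, q, ![a, b, c] i])) := by
    have h0 := hFI ![p, q] ![a, b, c]
    simp only [hs] at h0
    exact h0
  simp only [Fin.sum_univ_three, Matrix.cons_val_zero, Matrix.cons_val_one, Matrix.head_cons,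
    Matrix.cons_val_two, Matrix.tail_cons, hs, upd0, upd1, upd2] at h
  exact h

include hml halt in
lemma star (hFI : FundamentalIdentityI ω) (hLeib : LeibnizRule ω) (t a b c d e : U) :
    ω ![t, b, c] * ω ![a, d, e] + ω ![t, b, d] * ω ![c, a, e] + ω ![t, b, e] * ω ![c, d, a]
      + ω ![t, a, c] * ω ![b, d, e] + ω ![t, a, d] * ω ![c, b, e]
      + ω ![t, a, e] * ω ![c, d, b] = 0 := by
  have H := fi3 ω hFI t (a * b) c d e
  have H1 := fi3 ω hFI t b c d e
  have H2 := fi3 ω hFI t a c d e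
  simp only [leib2 K ω hml halt hLeib, add1 K ω hml, add2 K ω hml, add3 K ω hml,
    leib1 ω hLeib, leib3 K ω hml halt hLeib] at H
  linear_combination a * H1 + b * H2 - H

end Aux

lemma cancel3 {K : Type*} [Field K] {U : Type*} [CommRing U] [Algebra K U]
    (h3 : (3 : K) ≠ 0) (x : U) (h : (3 : U) * x = 0) : x = 0 := by
  have h' : (3 : K) • x = 0 := by rw [Algebra.smul_def, map_ofNat]; exact h
  calc x = ((3 : K)⁻¹ * 3) • x := by rw [inv_mul_cancel₀ h3, one_smul]
    _ = (3 : K)⁻¹ • ((3 : K) • x) := by rw [mul_smul]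
    _ = 0 := by rw [h', smul_zero]

/-- Any 3-Lie-Poisson algebra over a field of characteristic 0 or `> 3` is strong. -/
theorem three_LiePoisson_is_strong {K : Type*} [Field K] {U : Type*} [CommRing U] [Algebra K U]
    (hchar : ringChar K = 0 ∨ 3 < ringChar K)
    (ω : (Fin 3 → U) → U)
    (hml : IsMultilinear K ω) (halt : IsAlternating ω)
    (hFI : FundamentalIdentityI ω) (hLeib : LeibnizRule ω) :
    ∀ (u₁ u₂ : U) (v : Fin 4 → U),
      ∑ i : Fin 4, (-1 : U) ^ ((i : ℕ) + 1) *
        (ω ![u₁, u₂, v i] * ω (i.removeNth v)) = 0 := by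
  have h3 : (3 : K) ≠ 0 := by
    intro h
    have hd : ringChar K ∣ 3 := by
      have := (CharP.cast_eq_zero_iff K (ringChar K) 3).mp (by exact_mod_cast h)
      exact this
    rcases hchar with h0 | hgt
    · rw [h0] at hd; exact absurd (Nat.eq_zero_of_zero_dvd hd) (by norm_num)
    · exact absurd (Nat.le_of_dvd (by norm_num) hd) (by omega)
  intro u₁ u₂ v
  have r0 : Fin.removeNth (0 : Fin 4) v = ![v 1, v 2, v 3] := by
    ext j; fin_cases j <;> rfl
  have r1 : Fin.removeNth (1 : Fin 4) v = ![v 0, v 2, v 3] := by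
    ext j; fin_cases j <;> rfl
  have r2 : Fin.removeNth (2 : Fin 4) v = ![v 0, v 1, v 3] := by
    ext j; fin_cases j <;> rfl
  have r3 : Fin.removeNth (3 : Fin 4) v = ![v 0, v 1, v 2] := by
    ext j; fin_cases j <;> rfl
  have c0 : (((0 : Fin 4) : ℕ)) = 0 := rfl
  have c1 : (((1 : Fin 4) : ℕ)) = 1 := rfl
  have c2 : (((2 : Fin 4) : ℕ)) = 2 := rfl
  have c3 : (((3 : Fin 4) : ℕ)) = 3 := rfl
  rw [Fin.sum_univ_four, r0, r1, r2, r3, c0, c1, c2, c3]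
  norm_num
  refine cancel3 h3 _ ?_
  have S1 := star K ω hml halt hFI hLeib u₁ u₂ (v 0) (v 1) (v 2) (v 3)
  rw [sw12 K ω hml halt (v 1) u₂ (v 3), rot K ω hml halt (v 1) (v 2) u₂, sw12 K ω hml halt (v 1) (v 0) (v 3), rot K ω hml halt (v 1) (v 2) (v 0)] at S1
  have S2 := star K ω hml halt hFI hLeib u₁ u₂ (v 1) (v 0) (v 2) (v 3)
  rw [sw23 K ω hml halt u₁ (v 1) (v 0), sw12 K ω hml halt (v 0) u₂ (v 3), rot K ω hml halt (v 0) (v 2) u₂, sw23 K ω hml halt (v 0) (v 2) (v 1)] at S2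
  have S3 := star K ω hml halt hFI hLeib u₁ u₂ (v 2) (v 0) (v 1) (v 3)
  rw [sw23 K ω hml halt u₁ (v 2) (v 0), sw23 K ω hml halt u₁ (v 2) (v 1), sw12 K ω hml halt (v 0) u₂ (v 3), rot K ω hml halt (v 0) (v 1) u₂, sw12 K ω hml halt (v 2) (v 1) (v 3)] at S3
  have S4 := star K ω hml halt hFI hLeib u₁ u₂ (v 3) (v 0) (v 1) (v 2)
  rw [sw23 K ω hml halt u₁ (v 3) (v 0), sw23 K ω hml halt u₁ (v 3) (v 1), sw12 K ω hml halt (v 0) u₂ (v 2), sw23 K ω hml halt u₁ (v 3) (v 2), rot K ω hml halt (v 0) (v 1) u₂, rot' K ω hml halt (v 3) (v 1) (v 2), sw23 K ω hml halt (v 0) (v 3) (v 2)] at S4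
  have S5 := star K ω hml halt hFI hLeib u₂ u₁ (v 0) (v 1) (v 2) (v 3)
  rw [sw12 K ω hml halt (v 1) u₁ (v 3), rot K ω hml halt (v 1) (v 2) u₁, sw12 K ω hml halt u₂ u₁ (v 1), sw12 K ω hml halt u₂ u₁ (v 2), sw12 K ω hml halt (v 1) (v 0) (v 3), sw12 K ω hml halt u₂ u₁ (v 3), rot K ω hml halt (v 1) (v 2) (v 0)] at S5
  linear_combination -S1 - S2 + S3 - S4 - 2*S5
end

section
/- Let U be an associative commutative algebra over a field K, let n ≥ 3, and let ω : U^n → U be an alternating n-linear map such that f^ω(u_1,...,u_{n−1},v_1,...,v_{n+1}) = 0 for all arguments in U. Then r^ω also vanishes identically, where r^ω(a,b,c_1,...,c_{n−2},w_1,...,w_n) = Σ_{j=1}^n (−1)^{j+1} [ ω(a,c_1,...,c_{n−2},w_j)·ω(b,w_1,...,ŵ_j,...,w_n) + ω(b,c_1,...,c_{n−2},w_j)·ω(a,w_1,...,ŵ_j,...,w_n) ]. -/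
open Finset

theorem my_antisym {K : Type*} [Field K] {U : Type*} [CommRing U] [Algebra K U] {n : ℕ}
    (ω : (Fin n → U) → U) (hml : IsMultilinear K ω) (halt : IsAlternating ω)
    (v : Fin n → U) (i j : Fin n) (hij : i ≠ j) (x y : U) :
    ω (Function.update (Function.update v i x) j y) +
      ω (Function.update (Function.update v i y) j x) = 0 := by
  have hadd : ∀ (v : Fin n → U) (i : Fin n) (x y : U),
      ω (Function.update v i (x + y)) =
        ω (Function.update v i x) + ω (Function.update v i y) := by
    intro v i x y
    have := hml v i 1 x y
    simpa using this
  have h0 : ω (Function.update (Function.update v i (x + y)) j (x + y)) = 0 := by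
    apply halt _ i j hij
    rw [Function.update_of_ne hij, Function.update_self, Function.update_self]
  rw [hadd (Function.update v i (x + y)) j x y] at h0
  rw [Function.update_comm hij (x+y) x v, Function.update_comm hij (x+y) y v] at h0
  rw [hadd (Function.update v j x) i x y, hadd (Function.update v j y) i x y] at h0
  have e1 : ω (Function.update (Function.update v j x) i x) = 0 := by
    apply halt _ i j hij
    rw [Function.update_self, Function.update_of_ne (Ne.symm hij), Function.update_self]
  have e2 : ω (Function.update (Function.update v j y) i y) = 0 := by
    apply halt _ i j hij
    rw [Function.update_self, Function.update_of_ne (Ne.symm hij), Function.update_self]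
  rw [Function.update_comm (Ne.symm hij) x y v, Function.update_comm (Ne.symm hij) y x v] at h0
  rw [e1, e2] at h0
  linear_combination h0

/-- If the alternating `n`-ary map `ω` (here `n = m + 3 ≥ 3`) satisfies `f^ω = 0`, then
`r^ω = 0`, where
`r^ω(a,b,c_1,…,c_{n−2},w_1,…,w_n) = Σ_{j=1}^n (−1)^{j+1}
  [ω(a,c_1,…,c_{n−2},w_j)·ω(b,w_1,…,ŵ_j,…,w_n) + ω(b,c_1,…,c_{n−2},w_j)·ω(a,w_1,…,ŵ_j,…,w_n)]`. -/
theorem fPoly_zero_implies_rPoly_zero {K : Type*} [Field K] {U : Type*} [CommRing U]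
    [Algebra K U] (m : ℕ) (ω : (Fin (m + 3) → U) → U)
    (hml : IsMultilinear K ω) (halt : IsAlternating ω)
    (hf : ∀ (u : Fin (m + 2) → U) (v : Fin (m + 4) → U), fPoly ω u v = 0) :
    ∀ (a b : U) (c : Fin (m + 1) → U) (w : Fin (m + 3) → U),
      ∑ j : Fin (m + 3), (-1 : U) ^ (j : ℕ) *
        (ω (Fin.cons a (Fin.snoc c (w j))) * ω (Fin.cons b (j.removeNth w)) +
         ω (Fin.cons b (Fin.snoc c (w j))) * ω (Fin.cons a (j.removeNth w))) = 0 := by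
  intro a b c w
  have hcs : ∀ (x : U) (q : Fin (m+1) → U) (y : U),
      (Fin.snoc (Fin.cons x q) y : Fin (m+3) → U) = Fin.cons x (Fin.snoc q y) := by
    intro x q y
    exact (Fin.cons_snoc_eq_snoc_cons x q y).symm
  have hrm0 : ∀ (x : U) (q : Fin (m+3) → U),
      Fin.removeNth (0 : Fin (m+4)) (Fin.cons x q : Fin (m+4) → U) = q := by
    intro x q
    rw [Fin.removeNth_zero, Fin.tail_cons]
  have hrms : ∀ (x : U) (q : Fin (m+3) → U) (j : Fin (m+3)),
      Fin.removeNth j.succ (Fin.cons x q : Fin (m+4) → U) = Fin.cons x (j.removeNth q) := by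
    intro x q j
    ext k
    refine Fin.cases ?_ ?_ k
    · simp [Fin.removeNth]
    · intro l
      simp [Fin.removeNth, Fin.succ_succAbove_succ]
  have expand : ∀ p q : U,
      fPoly ω (Fin.cons p c) (Fin.cons q w) =
        - (ω (Fin.cons p (Fin.snoc c q)) * ω w) +
          ∑ j : Fin (m + 3), (-1 : U) ^ (j : ℕ) *
            (ω (Fin.cons p (Fin.snoc c (w j))) * ω (Fin.cons q (j.removeNth w))) := by
    intro p q
    rw [fPoly, Fin.sum_univ_succ]
    congr 1
    · rw [hrm0, hcs]
      simp
    · apply Finset.sum_congr rfl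
      intro j _
      rw [hrms, hcs]
      simp only [Fin.cons_succ, Fin.val_succ]
      ring_nf
  have F1 := hf (Fin.cons a c) (Fin.cons b w)
  have F2 := hf (Fin.cons b c) (Fin.cons a w)
  rw [expand a b] at F1
  rw [expand b a] at F2
  have hlast : Fin.last (m+2) = Fin.succ (Fin.last (m+1)) := rfl
  have hne : (0 : Fin (m+3)) ≠ Fin.last (m+2) := by simp [Fin.ext_iff]
  have hsym : ω (Fin.cons a (Fin.snoc c b)) + ω (Fin.cons b (Fin.snoc c a)) = 0 := by
    have key := my_antisym ω hml halt (Fin.cons a (Fin.snoc c b)) 0 (Fin.last (m+2))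
      hne a b
    have h0a : (Fin.cons a (Fin.snoc c b) : Fin (m+3) → U) 0 = a := Fin.cons_zero _ _
    have hlb : (Fin.cons a (Fin.snoc c b) : Fin (m+3) → U) (Fin.last (m+2)) = b := by
      rw [hlast, Fin.cons_succ, Fin.snoc_last]
    have e1 : Function.update (Function.update (Fin.cons a (Fin.snoc c b) : Fin (m+3) → U) 0 a)
        (Fin.last (m+2)) b = Fin.cons a (Fin.snoc c b) := by
      ext k
      refine Fin.cases ?_ ?_ k
      · rw [Function.update_of_ne hne, Function.update_self, Fin.cons_zero]
      · intro l
        refine Fin.lastCases ?_ ?_ l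
        · rw [← hlast, Function.update_self, hlast, Fin.cons_succ, Fin.snoc_last]
        · intro l'
          have h1 : Fin.succ (Fin.castSucc l') ≠ Fin.last (m+2) := by
            rw [Fin.succ_castSucc]
            exact Fin.ne_last_of_lt (Fin.castSucc_lt_last _)
          rw [Function.update_of_ne h1, Function.update_of_ne (Fin.succ_ne_zero _)]
    have e2 : Function.update (Function.update (Fin.cons a (Fin.snoc c b) : Fin (m+3) → U) 0 b)
        (Fin.last (m+2)) a = Fin.cons b (Fin.snoc c a) := by
      ext k
      refine Fin.cases ?_ ?_ k
      · rw [Function.update_of_ne hne, Function.update_self, Fin.cons_zero]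
      · intro l
        refine Fin.lastCases ?_ ?_ l
        · rw [← hlast, Function.update_self, hlast, Fin.cons_succ, Fin.snoc_last]
        · intro l'
          have h1 : Fin.succ (Fin.castSucc l') ≠ Fin.last (m+2) := by
            rw [Fin.succ_castSucc]
            exact Fin.ne_last_of_lt (Fin.castSucc_lt_last _)
          rw [Function.update_of_ne h1, Function.update_of_ne (Fin.succ_ne_zero _),
            Fin.cons_succ, Fin.cons_succ, Fin.snoc_castSucc, Fin.snoc_castSucc]
    rw [e1, e2] at key
    exact key
  have goal_split : ∑ j : Fin (m + 3), (-1 : U) ^ (j : ℕ) *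
        (ω (Fin.cons a (Fin.snoc c (w j))) * ω (Fin.cons b (j.removeNth w)) +
         ω (Fin.cons b (Fin.snoc c (w j))) * ω (Fin.cons a (j.removeNth w))) =
      (∑ j : Fin (m + 3), (-1 : U) ^ (j : ℕ) *
        (ω (Fin.cons a (Fin.snoc c (w j))) * ω (Fin.cons b (j.removeNth w)))) +
      (∑ j : Fin (m + 3), (-1 : U) ^ (j : ℕ) *
        (ω (Fin.cons b (Fin.snoc c (w j))) * ω (Fin.cons a (j.removeNth w)))) := by
    rw [← Finset.sum_add_distrib]
    apply Finset.sum_congr rfl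
    intro j _
    ring
  rw [goal_split]
  have hz : (ω (Fin.cons a (Fin.snoc c b)) + ω (Fin.cons b (Fin.snoc c a))) * ω w = 0 := by
    rw [hsym, zero_mul]
  linear_combination F1 + F2 + hz
end

section
/- Let U be an associative commutative algebra over a field K of characteristic 0 equipped with pairwise commuting derivations ∂_1,...,∂_n. Then the Jacobian satisfies the Fundamental Identity of type I (the n-Lie identity): Jac_n^S(u_1,...,u_{n−1}, Jac_n^S(v_1,...,v_n)) = Σ_{i=1}^n Jac_n^S(v_1,...,v_{i−1}, Jac_n^S(u_1,...,u_{n−1},v_i), v_{i+1},...,v_n) for all u_j, v_i ∈ U. -/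
open Finset

/-- The Jacobian `Jac_n^S(u_1,…,u_n) = det(∂_i u_j)` associated with a family of
derivations `∂_1,…,∂_n` of `U`. -/
noncomputable def jacS {K : Type*} [Field K] {U : Type*} [CommRing U] [Algebra K U] {n : ℕ}
    (pd : Fin n → Derivation K U U) (u : Fin n → U) : U :=
  Matrix.det (Matrix.of fun i j => pd i (u j))

section aux
variable {K : Type*} [Field K] {U : Type*} [CommRing U] [Algebra K U]

/-- Product rule for derivations over a finite set. -/
lemma jac_deriv_prod {ι : Type*} [DecidableEq ι] (D : Derivation K U U) (s : Finset ι)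
    (f : ι → U) :
    D (∏ i ∈ s, f i) = ∑ i ∈ s, D (f i) * ∏ j ∈ s.erase i, f j := by
  induction s using Finset.induction with
  | empty => simp
  | @insert a s ha ih =>
    rw [Finset.prod_insert ha, Derivation.leibniz, smul_eq_mul, smul_eq_mul, ih,
      Finset.sum_insert ha, Finset.erase_insert ha, Finset.mul_sum]
    rw [add_comm]
    congr 1
    · ring
    refine Finset.sum_congr rfl fun i hi => ?_
    rw [Finset.erase_insert_of_ne (by rintro rfl; exact ha hi),
      Finset.prod_insert (fun h => ha (Finset.mem_of_mem_erase h))]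
    ring

/-- A derivation applied to a determinant: columnwise Leibniz rule. -/
lemma jac_deriv_det {m : ℕ} (D : Derivation K U U) (A : Matrix (Fin m) (Fin m) U) :
    D A.det = ∑ j, (A.updateCol j fun i => D (A i j)).det := by
  rw [Matrix.det_apply, map_sum]
  have h1 : ∀ σ : Equiv.Perm (Fin m), D (Equiv.Perm.sign σ • ∏ i, A (σ i) i)
      = ∑ j, Equiv.Perm.sign σ • (D (A (σ j) j) * ∏ i ∈ univ.erase j, A (σ i) i) := by
    intro σ
    rw [Units.smul_def, map_zsmul, jac_deriv_prod, Finset.smul_sum]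
    exact Finset.sum_congr rfl fun j _ => by rw [Units.smul_def]
  rw [Finset.sum_congr rfl fun σ _ => h1 σ, Finset.sum_comm]
  refine Finset.sum_congr rfl fun j _ => ?_
  rw [Matrix.det_apply]
  refine Finset.sum_congr rfl fun σ _ => ?_
  congr 1
  rw [← Finset.mul_prod_erase _ _ (Finset.mem_univ j)]
  congr 1
  · simp [Matrix.updateCol_apply]
  · exact Finset.prod_congr rfl fun i hi => by
      simp [Matrix.updateCol_apply, Finset.ne_of_mem_erase hi]

/-- Determinant is additive over a finite sum in one column. -/
lemma jac_det_updateCol_sum {m : ℕ} {ι : Type*} [DecidableEq ι]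
    (A : Matrix (Fin m) (Fin m) U) (j : Fin m) (s : Finset ι) (f : ι → Fin m → U) :
    (A.updateCol j (∑ k ∈ s, f k)).det = ∑ k ∈ s, (A.updateCol j (f k)).det := by
  induction s using Finset.induction with
  | empty =>
    rw [Finset.sum_empty, Finset.sum_empty]
    exact Matrix.det_eq_zero_of_column_eq_zero j fun i => by
      rw [Matrix.updateCol_self]; rfl
  | @insert a s ha ih =>
    rw [Finset.sum_insert ha, Finset.sum_insert ha, Matrix.det_updateCol_add, ih]

omit [CommRing U] in
lemma jac_updateCol_comm {m : ℕ} (A : Matrix (Fin m) (Fin m) U) {j l : Fin m} (h : j ≠ l)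
    (x y : Fin m → U) :
    (A.updateCol j x).updateCol l y = (A.updateCol l y).updateCol j x := by
  ext r s
  simp only [Matrix.updateCol_apply]
  split_ifs with h1 h2
  · exact absurd (h1.symm.trans h2) h.symm
  · rfl
  · rfl
  · rfl

lemma jac_det_update_two_swap {m : ℕ} (A : Matrix (Fin m) (Fin m) U) {j l : Fin m} (hjl : j ≠ l)
    (x y : Fin m → U) :
    ((A.updateCol j x).updateCol l y).det
      = -((A.updateCol j y).updateCol l x).det := by
  have h : (A.updateCol j y).updateCol l x =
      ((A.updateCol j x).updateCol l y).submatrix id (Equiv.swap j l) := by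
    ext r s
    by_cases hs1 : s = j
    · subst hs1
      simp [Matrix.updateCol_apply, hjl, Equiv.swap_apply_left, hjl.symm]
    · by_cases hs2 : s = l
      · subst hs2
        simp [Matrix.updateCol_apply, hjl, Equiv.swap_apply_right, hs1]
      · simp [Matrix.updateCol_apply, hs1, hs2, Equiv.swap_apply_of_ne_of_ne hs1 hs2]
  rw [h, Matrix.det_permute', Equiv.Perm.sign_swap hjl]
  push_cast
  ring

end aux

/-- Over a field of characteristic `0`, the Jacobian of pairwise commuting derivations
satisfies the Fundamental Identity of type I (the `n`-Lie identity):
`Jac(u_1,…,u_n, Jac(v_1,…,v_{n+1})) = Σ_i Jac(v_1,…,Jac(u_1,…,u_n,v_i),…,v_{n+1})`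
(here the arity is `n + 1`). -/
theorem jacS_fundamental_identity_I {K : Type*} [Field K] [CharZero K]
    {U : Type*} [CommRing U] [Algebra K U] {n : ℕ}
    (pd : Fin (n + 1) → Derivation K U U)
    (hcomm : ∀ i j (u : U), pd i (pd j u) = pd j (pd i u)) :
    ∀ (u : Fin n → U) (v : Fin (n + 1) → U),
      jacS pd (Fin.snoc u (jacS pd v)) =
        ∑ i : Fin (n + 1), jacS pd (Function.update v i (jacS pd (Fin.snoc u (v i)))) := by
  intro u v
  classical
  set A : Matrix (Fin (n+1)) (Fin (n+1)) U :=
    Matrix.of (fun i j => pd i ((Fin.snoc u (0:U) : Fin (n+1) → U) j)) with hA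
  set c : Fin (n+1) → U :=
    fun k => (A.updateCol (Fin.last n) (Pi.single k 1)).det with hc
  set D : Derivation K U U := ∑ k, c k • pd k with hDdef
  set Mv : Matrix (Fin (n+1)) (Fin (n+1)) U := Matrix.of (fun i j => pd i (v j)) with hMv
  -- the derivation D applied pointwise
  have hDapp : ∀ w, D w = ∑ k, c k * pd k w := by
    intro w
    rw [hDdef]
    rw [show ⇑(∑ k : Fin (n+1), c k • pd k) = ∑ k : Fin (n+1), ⇑(c k • pd k) from
      map_sum (Derivation.coeFnAddMonoidHom (R := K) (A := U) (M := U)) _ _]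
    rw [Finset.sum_apply]
    exact Finset.sum_congr rfl fun k _ => rfl
  -- the matrix of `snoc u w` is `A` with last column updated
  have hcol : ∀ w : U, (Matrix.of fun i j => pd i ((Fin.snoc u w : Fin (n+1) → U) j)) =
      A.updateCol (Fin.last n) (fun i => pd i w) := by
    intro w
    ext i j
    induction j using Fin.lastCases with
    | last => simp [Matrix.updateCol_self]
    | cast j' =>
      rw [Matrix.updateCol_ne (Fin.castSucc_lt_last j').ne, hA]
      simp
  have hsingle : ∀ w : U,
      (fun i : Fin (n+1) => pd i w) = ∑ k : Fin (n+1), pd k w • (Pi.single k (1:U) : Fin (n+1) → U) := by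
    intro w; funext i
    rw [Finset.sum_apply, Finset.sum_eq_single i]
    · simp
    · intro b _ hb
      simp [Pi.single_apply, Ne.symm hb]
    · simp
  -- Step I : jacS of snoc = D
  have hD : ∀ w, jacS pd (Fin.snoc u w) = D w := by
    intro w
    have h1 : jacS pd (Fin.snoc u w)
        = (A.updateCol (Fin.last n) (fun i => pd i w)).det := by
      rw [jacS, hcol w]
    rw [h1, hsingle w, jac_det_updateCol_sum, hDapp]
    refine Finset.sum_congr rfl fun k _ => ?_
    rw [Matrix.det_updateCol_smul]
    simp only [hc]
    exact mul_comm _ _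
  -- Step II
  have hjacv : jacS pd v = Mv.det := by rw [hMv]; rfl
  have step2 : jacS pd (Fin.snoc u (jacS pd v))
      = ∑ j, (Mv.updateCol j fun i => D (Mv i j)).det := by
    rw [hD, hjacv]
    exact jac_deriv_det D Mv
  -- Step III : commutator of D with the pd i
  have hswap : ∀ (i : Fin (n+1)) (x : U),
      D (pd i x) = pd i (D x) - ∑ k, pd i (c k) * pd k x := by
    intro i x
    have h1 : pd i (D x) = ∑ k, (pd i (c k) * pd k x + c k * pd i (pd k x)) := by
      rw [hDapp, map_sum]
      refine Finset.sum_congr rfl fun k _ => ?_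
      rw [Derivation.leibniz, smul_eq_mul, smul_eq_mul]
      ring
    rw [h1, Finset.sum_add_distrib, add_sub_cancel_left, hDapp]
    exact Finset.sum_congr rfl fun k _ => by rw [hcomm k i x]
  -- Step IV : matrix form of the updated Jacobians
  have hupdate : ∀ (j : Fin (n+1)) (w : U),
      jacS pd (Function.update v j w) = (Mv.updateCol j fun i => pd i w).det := by
    intro j w
    rw [jacS, hMv]
    congr 1
    ext i j'
    by_cases h : j' = j
    · subst h
      simp [Matrix.updateCol_self, Function.update_apply]
    · simp [Matrix.updateCol_ne h, Function.update_apply, h]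
  have hsplit : ∀ j, (Mv.updateCol j fun i => D (Mv i j)).det
      = jacS pd (Function.update v j (jacS pd (Fin.snoc u (v j))))
        - ∑ k, pd k (v j) * (Mv.updateCol j fun i => pd i (c k)).det := by
    intro j
    have e1 : (fun i => D (Mv i j)) =
        (fun i => pd i (D (v j))) + fun i => -(∑ k, pd i (c k) * pd k (v j)) := by
      funext i
      simp only [Pi.add_apply]
      rw [hMv, Matrix.of_apply, hswap]
      ring
    rw [e1, Matrix.det_updateCol_add]
    have e3 : jacS pd (Function.update v j (jacS pd (Fin.snoc u (v j))))
        = (Mv.updateCol j fun i => pd i (D (v j))).det := by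
      rw [hupdate, hD]
    rw [e3, sub_eq_add_neg]
    congr 1
    have e2 : (fun i => -(∑ k, pd i (c k) * pd k (v j)))
        = ∑ k : Fin (n+1), (-(pd k (v j))) • fun i => pd i (c k) := by
      funext i
      rw [Finset.sum_apply, ← Finset.sum_neg_distrib]
      refine Finset.sum_congr rfl fun k _ => ?_
      simp only [Pi.smul_apply, smul_eq_mul, neg_mul]
      ring
    rw [e2, jac_det_updateCol_sum, ← Finset.sum_neg_distrib]
    refine Finset.sum_congr rfl fun k _ => ?_
    rw [Matrix.det_updateCol_smul]
    ring
  -- Step VI : divergence of the cofactors vanishes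
  have hSzero : (∑ k, pd k (c k)) = 0 := by
    have hterm : ∀ k : Fin (n+1), pd k (c k)
        = ∑ j, ((A.updateCol (Fin.last n) (Pi.single k 1)).updateCol j
            (fun i => pd k ((A.updateCol (Fin.last n) (Pi.single k 1)) i j))).det := by
      intro k
      simp only [hc]
      exact jac_deriv_det (pd k) _
    rw [Finset.sum_congr rfl fun k _ => hterm k, Finset.sum_comm]
    refine Finset.sum_eq_zero fun j _ => ?_
    by_cases hj : j = Fin.last n
    · subst hj
      refine Finset.sum_eq_zero fun k _ => ?_
      refine Matrix.det_eq_zero_of_column_eq_zero (Fin.last n) fun i => ?_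
      rw [Matrix.updateCol_self, Matrix.updateCol_self]
      rcases eq_or_ne i k with h | h
      · subst h; simp
      · simp [Pi.single_apply, h]
    · set g : Fin (n+1) → Fin (n+1) → U := fun i k => pd k (A i j) with hg
      set Φ : Fin (n+1) → Fin (n+1) → U := fun i k =>
        ((A.updateCol (Fin.last n) (Pi.single k 1)).updateCol j (Pi.single i 1)).det
        with hΦ
      have hgsymm : ∀ i k, g i k = g k i := by
        intro i k
        simp only [hg, hA, Matrix.of_apply]
        exact hcomm k i _
      have hanti : ∀ i k, Φ i k = -Φ k i := by
        intro i k
        simp only [hΦ]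
        rw [jac_updateCol_comm A (Ne.symm hj), jac_det_update_two_swap A hj,
          jac_updateCol_comm A hj]
      have hX : ∀ k, ((A.updateCol (Fin.last n) (Pi.single k 1)).updateCol j
            (fun i => pd k ((A.updateCol (Fin.last n) (Pi.single k 1)) i j))).det
          = ∑ i, g i k * Φ i k := by
        intro k
        have hcolk : (fun i => pd k ((A.updateCol (Fin.last n) (Pi.single k 1)) i j))
            = ∑ i : Fin (n+1), g i k • (Pi.single i (1:U) : Fin (n+1) → U) := by
          funext r
          rw [Finset.sum_apply, Finset.sum_eq_single r]
          · simp [Matrix.updateCol_ne hj, hg]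
          · intro b _ hb
            simp [Pi.single_apply, Ne.symm hb]
          · simp
        rw [hcolk, jac_det_updateCol_sum]
        refine Finset.sum_congr rfl fun i _ => ?_
        rw [Matrix.det_updateCol_smul]
      rw [Finset.sum_congr rfl fun k _ => hX k]
      have hXval : (∑ k, ∑ i, g i k * Φ i k) = -(∑ k, ∑ i, g i k * Φ i k) := by
        calc (∑ k, ∑ i, g i k * Φ i k) = ∑ i, ∑ k, g i k * Φ i k := Finset.sum_comm
          _ = ∑ i, ∑ k, -(g k i * Φ k i) := by
              refine Finset.sum_congr rfl fun i _ => Finset.sum_congr rfl fun k _ => ?_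
              rw [hgsymm i k, hanti i k]; ring
          _ = -(∑ i, ∑ k, g k i * Φ k i) := by
              simp [Finset.sum_neg_distrib]
      have h2 : (2:K) • (∑ k, ∑ i, g i k * Φ i k) = 0 := by
        rw [two_smul]
        exact add_eq_zero_iff_eq_neg.mpr hXval
      have h3 := congrArg (fun y => (2:K)⁻¹ • y) h2
      simpa [smul_smul, inv_mul_cancel₀ (two_ne_zero (α := K))] using h3
  -- Step V : assemble via Cramer's rule
  have herr : (∑ j, ∑ k, pd k (v j) * (Mv.updateCol j fun i => pd i (c k)).det)
      = Mv.det * ∑ k, pd k (c k) := by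
    rw [Finset.sum_comm, Finset.mul_sum]
    refine Finset.sum_congr rfl fun k _ => ?_
    have hcr := congrFun (Matrix.mulVec_cramer Mv (fun i => pd i (c k))) k
    simp only [Matrix.mulVec, dotProduct, Matrix.cramer_apply, Pi.smul_apply,
      smul_eq_mul] at hcr
    rw [← hcr]
    refine Finset.sum_congr rfl fun j _ => ?_
    rw [hMv]
    rfl
  rw [step2, Finset.sum_congr rfl fun j _ => hsplit j, Finset.sum_sub_distrib, herr,
    hSzero, mul_zero, sub_zero]
end

section
/- Let U be an associative commutative algebra over a field K of characteristic 0 equipped with pairwise commuting derivations ∂_1,...,∂_n. Then the Jacobian satisfies the Fundamental Identity of type II: Σ_{i=1}^{n+1} (−1)^i Jac_n^S(u_1,...,u_{n−1},v_i)·Jac_n^S(v_1,...,v_{i−1},v_{i+1},...,v_{n+1}) = 0 for all u_1,...,u_{n−1}, v_1,...,v_{n+1} ∈ U. -/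
open Finset

/-- Over a field of characteristic `0`, the Jacobian of pairwise commuting derivations
satisfies the Fundamental Identity of type II:
`Σ_{i=1}^{n+2} (−1)^i Jac(u_1,…,u_n,v_i)·Jac(v_1,…,v̂_i,…,v_{n+2}) = 0`
(here the arity is `n + 1`). -/
theorem jacS_fundamental_identity_II {K : Type*} [Field K] [CharZero K]
    {U : Type*} [CommRing U] [Algebra K U] {n : ℕ}
    (pd : Fin (n + 1) → Derivation K U U)
    (hcomm : ∀ i j (u : U), pd i (pd j u) = pd j (pd i u)) :
    ∀ (u : Fin n → U) (v : Fin (n + 2) → U),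
      ∑ i : Fin (n + 2), (-1 : U) ^ ((i : ℕ) + 1) *
        (jacS pd (Fin.snoc u (v i)) * jacS pd (i.removeNth v)) = 0 := by
  intro u v
  -- Key identity: for each k, the cofactor expansion of a determinant with a
  -- repeated row vanishes.
  have key : ∀ k : Fin (n + 1),
      ∑ j : Fin (n + 2), (-1 : U) ^ (j : ℕ) * pd k (v j) * jacS pd (j.removeNth v) = 0 := by
    intro k
    have h0 : (Matrix.of (Fin.cons (fun j => pd k (v j)) (fun i j => pd i (v j)) :
        Fin (n + 2) → Fin (n + 2) → U)).det = 0 := by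
      apply Matrix.det_zero_of_row_eq (i := 0) (j := k.succ) (Fin.succ_ne_zero k).symm
      funext j
      simp [Matrix.of_apply, Fin.cons_succ]
    rw [Matrix.det_succ_row_zero] at h0
    rw [← h0]
    apply Finset.sum_congr rfl
    intro j _
    have hdet : jacS pd (j.removeNth v) =
        ((Matrix.of (Fin.cons (fun j => pd k (v j)) (fun i j => pd i (v j)) :
          Fin (n + 2) → Fin (n + 2) → U)).submatrix Fin.succ j.succAbove).det := by
      unfold jacS
      congr 1
    rw [hdet]
    simp [Matrix.of_apply, Fin.cons_zero]
  -- The minors of the `snoc` Jacobian obtained by deleting the last column.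
  set g : Fin (n + 1) → U :=
    fun k => Matrix.det (Matrix.of fun (a b : Fin n) => pd (k.succAbove a) (u b)) with hg
  have hsnoc : ∀ i : Fin (n + 2), jacS pd (Fin.snoc u (v i)) =
      ∑ k : Fin (n + 1), (-1 : U) ^ ((k : ℕ) + n) * pd k (v i) * g k := by
    intro i
    unfold jacS
    rw [Matrix.det_succ_column _ (Fin.last n)]
    apply Finset.sum_congr rfl
    intro k _
    have hdet : ((Matrix.of fun a b => pd a ((Fin.snoc u (v i) : Fin (n + 1) → U) b)).submatrix
        k.succAbove (Fin.last n).succAbove).det = g k := by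
      rw [hg]
      congr 1
      ext a b
      simp [Fin.succAbove_last, Fin.snoc_castSucc]
    rw [hdet]
    simp [Matrix.of_apply, Fin.snoc_last, Fin.val_last]
  calc ∑ i : Fin (n + 2), (-1 : U) ^ ((i : ℕ) + 1) *
        (jacS pd (Fin.snoc u (v i)) * jacS pd (i.removeNth v))
      = ∑ k : Fin (n + 1), (-(-1 : U) ^ ((k : ℕ) + n) * g k) *
          (∑ j : Fin (n + 2), (-1 : U) ^ (j : ℕ) * pd k (v j) * jacS pd (j.removeNth v)) := by
        simp only [hsnoc, Finset.sum_mul, Finset.mul_sum]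
        rw [Finset.sum_comm]
        apply Finset.sum_congr rfl
        intro k _
        apply Finset.sum_congr rfl
        intro i _
        ring
    _ = 0 := by
        simp only [key, mul_zero, Finset.sum_const_zero]
end

section
/- Let K be a field of characteristic 0, let (U,·,ω) be a strong n-Lie-Poisson algebra over K, and let D : U → U be a K-linear map that is simultaneously a derivation of the associative multiplication · and a derivation of ω (i.e. D(ω(u_1,...,u_n)) = Σ_{i=1}^n ω(u_1,...,D(u_i),...,u_n)). Define the alternating (n+1)-linear map ω̄ = D∧ω by ω̄(u_0,u_1,...,u_n) = Σ_{i=0}^n (−1)^i D(u_i)·ω(u_0,...,û_i,...,u_n). Then (U,·,ω̄) is a strong (n+1)-Lie-Poisson algebra. -/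
open Finset

/-- The `(n+2)`-ary multiplication `D ∧ ω`:
`(D∧ω)(u_0,…,u_{n+1}) = Σ_i (−1)^i D(u_i)·ω(u_0,…,û_i,…,u_{n+1})`. -/
def wedgeD {U : Type*} [CommRing U] {n : ℕ} (D : U → U) (ω : (Fin (n + 1) → U) → U)
    (u : Fin (n + 2) → U) : U :=
  ∑ i : Fin (n + 2), (-1 : U) ^ (i : ℕ) * (D (u i) * ω (i.removeNth u))


/-! `D ∧ ω` is the alternatization of `x ↦ D x · ω`, hence multilinear and alternating.
For fixed `u`, the operator `X = (D ∧ ω)(u, ·)` is the `U`-linear combination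
`Σ_i (-1)^i D(u_i) · ω(u \ u_i, ·) + (-1)^(n+1) ω(u) · D` of maps `δ` that are derivations both of
`·` and of `ω`. The failure of `c · δ` to be a derivation of `D ∧ ω` can be computed: it consists
of terms killed by `f^ω = 0` (also used in the form `Σ_t ω(u', w_t) ω(w[t ↦ y]) = ω(u', y) ω(w)`),
of double sums `Σ (-1)^(j+k) D(v_j) D(v_k) …` whose terms cancel in pairs, and of a multiple of
`(D ∧ ω)(v)`. Summed over the combination, the total coefficient of `(D ∧ ω)(v)` is
`-(Σ_i ω(u \ u_i, (-1)^i D u_i) + D((-1)^(n+1) ω u))`, which vanishes because `D` is a derivation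
of `ω`. The strong condition for `D ∧ ω` reduces in the same way to that of `ω` and to
`D ∧ D = 0`. -/

open Function

namespace Fin

variable {N : ℕ}

theorem removeNth_castSucc_snoc {α : Type*} (i : Fin (N + 1)) (u : Fin (N + 1) → α) (x : α) :
    (castSucc i).removeNth (snoc u x : Fin (N + 2) → α) = snoc (i.removeNth u) x := by
  ext j
  induction j using lastCases with
  | last => simp [removeNth_apply, succAbove_castSucc_of_le _ _ (le_last i)]
  | cast j => simp [removeNth_apply, castSucc_succAbove_castSucc]

/-- `(k, j) ↦ (k.succAbove j, j.predAbove k)` exchanges the order in which the same two entries are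
removed from a tuple by `j.removeNth ∘ k.removeNth`. -/
theorem involutive_succAbove_predAbove :
    Involutive fun p : Fin (N + 2) × Fin (N + 1) => (p.1.succAbove p.2, p.2.predAbove p.1) :=
  fun ⟨k, j⟩ => by simp [succAbove_succAbove_predAbove, predAbove_predAbove_succAbove]

variable {R α : Type*} [CommRing R]

theorem neg_one_pow_mul_removeNth_removeNth_swap (G : α → α → (Fin N → α) → R)
    (v : Fin (N + 2) → α) (k : Fin (N + 2)) (j : Fin (N + 1)) :
    (-1 : R) ^ (k.succAbove j + j.predAbove k : ℕ) *
        G (v (k.succAbove j)) (v ((k.succAbove j).succAbove (j.predAbove k)))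
          ((j.predAbove k).removeNth ((k.succAbove j).removeNth v)) =
      -((-1 : R) ^ (k + j : ℕ) * G (v (k.succAbove j)) (v k) (j.removeNth (k.removeNth v))) := by
  rw [succAbove_succAbove_predAbove, ← removeNth_removeNth_eq_swap,
    neg_one_pow_succAbove_add_predAbove, neg_mul]

theorem sum_sum_neg_one_pow_removeNth_removeNth_swap (G : α → α → (Fin N → α) → R)
    (v : Fin (N + 2) → α) :
    ∑ k : Fin (N + 2), ∑ j : Fin (N + 1), (-1 : R) ^ (k + j : ℕ) *
        G (v k) (v (k.succAbove j)) (j.removeNth (k.removeNth v)) =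
      -∑ k : Fin (N + 2), ∑ j : Fin (N + 1), (-1 : R) ^ (k + j : ℕ) *
        G (v (k.succAbove j)) (v k) (j.removeNth (k.removeNth v)) := by
  simp only [← Fintype.sum_prod_type', ← sum_neg_distrib]
  rw [← Equiv.sum_comp (involutive_succAbove_predAbove.toPerm _)]
  exact Fintype.sum_congr _ _ fun p => neg_one_pow_mul_removeNth_removeNth_swap G v p.1 p.2

theorem sum_sum_neg_one_pow_removeNth_removeNth_eq_zero (G : α → α → (Fin N → α) → R)
    (hG : ∀ a b w, G a b w = G b a w) (v : Fin (N + 2) → α) :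
    ∑ k : Fin (N + 2), ∑ j : Fin (N + 1), (-1 : R) ^ (k + j : ℕ) *
      G (v k) (v (k.succAbove j)) (j.removeNth (k.removeNth v)) = 0 := by
  rw [← Fintype.sum_prod_type']
  refine sum_ninvolution (fun p => (p.1.succAbove p.2, p.2.predAbove p.1)) (fun p => ?_)
    (fun p _ => ?_) (fun _ => mem_univ _) involutive_succAbove_predAbove
  · simp only
    rw [neg_one_pow_mul_removeNth_removeNth_swap, hG, add_neg_cancel]
  · simp [Prod.ext_iff, succAbove_ne]

end Fin

theorem IsAlternating.exists_alternatingMap {K U : Type*} [Field K] [CommRing U] [Algebra K U]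
    {m : ℕ} {ω : (Fin m → U) → U} (halt : IsAlternating ω) (hml : IsMultilinear K ω) :
    ∃ Ω : U [⋀^Fin m]→ₗ[K] U, ⇑Ω = ω := by
  have map_add (v : Fin m → U) (i : Fin m) (x y : U) :
      ω (update v i (x + y)) = ω (update v i x) + ω (update v i y) := by
    simpa using hml v i 1 x y
  have map_smul (v : Fin m → U) (i : Fin m) (c : K) (x : U) :
      ω (update v i (c • x)) = c • ω (update v i x) := by
    have h0 : ω (update v i 0) = 0 := by simpa using (map_add v i 0 0).symm
    simpa [h0] using hml v i c x 0
  exact ⟨{ toFun := ω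
           map_update_add' := fun v i x y => by convert map_add v i x y
           map_update_smul' := fun v i c x => by convert map_smul v i c x
           map_eq_zero_of_eq' := fun v i j hv hij => halt v i j hij hv }, rfl⟩

theorem AlternatingMap.isMultilinear {K U : Type*} [Field K] [CommRing U] [Algebra K U] {m : ℕ}
    (Ω : U [⋀^Fin m]→ₗ[K] U) : IsMultilinear K Ω := by
  intro v i c x y
  rw [Ω.map_update_add, Ω.map_update_smul]

theorem AlternatingMap.isAlternating {R U : Type*} [CommSemiring R] [CommRing U] [Algebra R U]
    {m : ℕ} (Ω : U [⋀^Fin m]→ₗ[R] U) : IsAlternating Ω :=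
  fun v _ _ hij hv => Ω.map_eq_zero_of_eq v hv hij

namespace AlternatingMap

variable {R U : Type*} [CommRing R] [CommRing U] [Algebra R U] {n : ℕ}
  (Ω : U [⋀^Fin (n + 1)]→ₗ[R] U)

theorem map_update_eq_neg_one_pow_mul_cons (w : Fin (n + 1) → U) (t : Fin (n + 1)) (x : U) :
    Ω (update w t x) = (-1) ^ (t : ℕ) * Ω (Fin.cons x (t.removeNth w)) := by
  rw [← Fin.insertNth_removeNth, Ω.map_insertNth]
  simp [Matrix.vecCons]

theorem map_snoc_eq_neg_one_pow_mul_cons (w : Fin n → U) (x : U) :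
    Ω (Fin.snoc w x) = (-1) ^ n * Ω (Fin.cons x w) := by
  rw [← Fin.insertNth_last', Ω.map_insertNth]
  simp [Matrix.vecCons]

theorem map_update_neg_one_pow_mul (w : Fin (n + 1) → U) (t : Fin (n + 1)) (e : ℕ) (x : U) :
    Ω (update w t ((-1) ^ e * x)) = (-1) ^ e * Ω (update w t x) := by
  rcases neg_one_pow_eq_or U e with h | h <;> simp [h, Ω.map_update_neg]

theorem map_cons_neg_one_pow_mul (w : Fin n → U) (e : ℕ) (x : U) :
    Ω (Fin.cons ((-1) ^ e * x) w) = (-1) ^ e * Ω (Fin.cons x w) := by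
  have h (z : U) : (Fin.cons z w : Fin (n + 1) → U) = update (Fin.cons 0 w) 0 z :=
    (Fin.update_cons_zero _ _ _).symm
  rw [h ((-1) ^ e * x), h x, map_update_neg_one_pow_mul]

theorem map_update_mul (hL : LeibnizRule Ω) (w : Fin (n + 1) → U) (t : Fin (n + 1)) (a b : U) :
    Ω (update w t (a * b)) = a * Ω (update w t b) + b * Ω (update w t a) := by
  simp only [map_update_eq_neg_one_pow_mul_cons, hL a b]
  ring

theorem map_snoc_mul (hL : LeibnizRule Ω) (u : Fin n → U) (a b : U) :
    Ω (Fin.snoc u (a * b)) = a * Ω (Fin.snoc u b) + b * Ω (Fin.snoc u a) := by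
  have h (z : U) : (Fin.snoc u z : Fin (n + 1) → U) = update (Fin.snoc u 0) (Fin.last n) z := by
    rw [Fin.update_snoc_last]
  rw [h (a * b), h a, h b, Ω.map_update_mul hL]

end AlternatingMap

theorem map_neg_one_pow_mul {U F : Type*} [CommRing U] [FunLike F U U] [AddMonoidHomClass F U U]
    (f : F) (e : ℕ) (z : U) : f ((-1) ^ e * z) = (-1) ^ e * f z := by
  rcases neg_one_pow_eq_or U e with h | h <;> simp [h]

section Strong

variable {U : Type*} [CommRing U] {n : ℕ}

theorem sum_neg_one_pow_mul_snoc_mul_removeNth_eq_zero {ω : (Fin (n + 1) → U) → U}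
    (hs : ∀ u v, fPoly ω u v = 0) (u : Fin n → U) (v : Fin (n + 2) → U) :
    ∑ k : Fin (n + 2), (-1) ^ (k : ℕ) * (ω (Fin.snoc u (v k)) * ω (k.removeNth v)) = 0 := by
  simpa [fPoly, pow_succ, sum_neg_distrib] using hs u v

/-- The strong condition applied to the tuple `(y, w_0, …, w_n)`. -/
theorem sum_snoc_mul_update_eq {R : Type*} [CommRing R] [Algebra R U]
    (Ω : U [⋀^Fin (n + 1)]→ₗ[R] U) (hs : ∀ u v, fPoly Ω u v = 0) (u : Fin n → U)
    (w : Fin (n + 1) → U) (y : U) :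
    ∑ t, Ω (Fin.snoc u (w t)) * Ω (update w t y) = Ω (Fin.snoc u y) * Ω w := by
  have h := sum_neg_one_pow_mul_snoc_mul_removeNth_eq_zero hs u (Fin.cons y w)
  have hr (t : Fin (n + 1)) :
      t.succ.removeNth (Fin.cons y w : Fin (n + 2) → U) = Fin.cons y (t.removeNth w) :=
    Fin.cons_comp_succ_succAbove y w t
  rw [Fin.sum_univ_succ] at h
  simp only [Fin.cons_zero, Fin.removeNth_zero, Fin.tail_cons, Fin.cons_succ, hr, Fin.val_zero,
    pow_zero, one_mul, Fin.val_succ, pow_succ, mul_neg_one, neg_mul, sum_neg_distrib] at h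
  calc ∑ t, Ω (Fin.snoc u (w t)) * Ω (update w t y)
      = ∑ t : Fin (n + 1),
          (-1) ^ (t : ℕ) * (Ω (Fin.snoc u (w t)) * Ω (Fin.cons y (t.removeNth w))) :=
        sum_congr rfl fun t _ => by rw [Ω.map_update_eq_neg_one_pow_mul_cons]; ring
    _ = Ω (Fin.snoc u y) * Ω w := by linear_combination -h

end Strong

section Wedge

variable {U : Type*} [CommRing U] {n : ℕ}

def wedgeAlternatingMap {R : Type*} [CommRing R] [Algebra R U] (Ω : U [⋀^Fin (n + 1)]→ₗ[R] U)
    (D : U →ₗ[R] U) : U [⋀^Fin (n + 2)]→ₗ[R] U :=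
  AlternatingMap.alternatizeUncurryFin
    { toFun := fun x => D x • Ω
      map_add' := fun x y => by rw [map_add, add_smul]
      map_smul' := fun c x => by ext; simp }

theorem coe_wedgeAlternatingMap {R : Type*} [CommRing R] [Algebra R U]
    (Ω : U [⋀^Fin (n + 1)]→ₗ[R] U) (D : U →ₗ[R] U) :
    ⇑(wedgeAlternatingMap Ω D) = wedgeD D Ω := by
  ext v
  simp [wedgeAlternatingMap, AlternatingMap.alternatizeUncurryFin_apply, wedgeD]

variable (D : U → U) (ω : (Fin (n + 1) → U) → U)

theorem wedgeD_snoc (u : Fin (n + 1) → U) (x : U) :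
    wedgeD D ω (Fin.snoc u x) =
      ∑ i : Fin (n + 1), (-1) ^ (i : ℕ) * D (u i) * ω (Fin.snoc (i.removeNth u) x) +
        (-1) ^ (n + 1) * ω u * D x := by
  rw [wedgeD, Fin.sum_univ_castSucc]
  simp only [Fin.snoc_castSucc, Fin.removeNth_castSucc_snoc, Fin.snoc_last, Fin.val_castSucc,
    Fin.val_last, Fin.removeNth_last, Fin.init_snoc, mul_assoc]
  ring

theorem wedgeD_cons (x : U) (u : Fin (n + 1) → U) :
    wedgeD D ω (Fin.cons x u) =
      D x * ω u -
        ∑ s : Fin (n + 1), (-1) ^ (s : ℕ) * (D (u s) * ω (Fin.cons x (s.removeNth u))) := by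
  rw [wedgeD, Fin.sum_univ_succ]
  simp only [Fin.cons_zero, Fin.removeNth_zero, Fin.tail_cons, Fin.cons_succ, Fin.val_zero,
    pow_zero, one_mul, Fin.val_succ, pow_succ, sub_eq_add_neg, ← sum_neg_distrib]
  congr 1
  refine sum_congr rfl fun s _ => ?_
  rw [show s.succ.removeNth (Fin.cons x u : Fin (n + 2) → U) = Fin.cons x (s.removeNth u) from
    Fin.cons_comp_succ_succAbove x u s]
  ring

theorem sum_wedgeD_update (y v : Fin (n + 2) → U) :
    ∑ k, wedgeD D ω (update v k (y k)) =
      ∑ j : Fin (n + 2), (-1) ^ (j : ℕ) * (D (y j) * ω (j.removeNth v) +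
        D (v j) * ∑ t, ω (update (j.removeNth v) t (y (j.succAbove t)))) := by
  simp only [wedgeD]
  rw [sum_comm]
  refine sum_congr rfl fun j _ => ?_
  rw [Fin.sum_univ_succAbove _ j, update_self, Fin.removeNth_update, mul_add, mul_sum, mul_sum]
  congr 1
  refine sum_congr rfl fun t _ => ?_
  rw [update_of_ne (Fin.succAbove_ne j t).symm, Fin.removeNth_update_succAbove]

theorem sum_neg_one_pow_mul_wedgeD_removeNth (L : U → U) (v : Fin (n + 3) → U) :
    ∑ k : Fin (n + 3), (-1) ^ (k : ℕ) * (L (v k) * wedgeD D ω (k.removeNth v)) =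
      ∑ k : Fin (n + 3), ∑ j : Fin (n + 2), (-1) ^ (k + j : ℕ) *
        (L (v k) * D (v (k.succAbove j)) * ω (j.removeNth (k.removeNth v))) := by
  simp only [wedgeD, mul_sum, pow_add]
  refine sum_congr rfl fun k _ => sum_congr rfl fun j _ => ?_
  rw [Fin.removeNth_apply]
  ring

theorem sum_neg_one_pow_apply_mul_wedgeD_removeNth_eq_zero (v : Fin (n + 3) → U) :
    ∑ k : Fin (n + 3), (-1) ^ (k : ℕ) * (D (v k) * wedgeD D ω (k.removeNth v)) = 0 := by
  rw [sum_neg_one_pow_mul_wedgeD_removeNth]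
  exact Fin.sum_sum_neg_one_pow_removeNth_removeNth_eq_zero (fun a b w => D a * D b * ω w)
    (fun a b w => by ring) v

theorem sum_neg_one_pow_snoc_mul_wedgeD_removeNth_eq_zero (hs : ∀ u v, fPoly ω u v = 0)
    (u : Fin n → U) (v : Fin (n + 3) → U) :
    ∑ k : Fin (n + 3), (-1) ^ (k : ℕ) * (ω (Fin.snoc u (v k)) * wedgeD D ω (k.removeNth v)) =
      0 := by
  rw [sum_neg_one_pow_mul_wedgeD_removeNth D ω (fun x => ω (Fin.snoc u x)),
    Fin.sum_sum_neg_one_pow_removeNth_removeNth_swap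
      (fun a b w => ω (Fin.snoc u a) * D b * ω w), neg_eq_zero]
  refine sum_eq_zero fun k _ => ?_
  rw [← mul_zero ((-1) ^ (k : ℕ) * D (v k)),
    ← sum_neg_one_pow_mul_snoc_mul_removeNth_eq_zero hs u (k.removeNth v), mul_sum]
  refine sum_congr rfl fun j _ => ?_
  rw [Fin.removeNth_apply]
  ring

theorem fPoly_wedgeD_eq_zero (hs : ∀ u v, fPoly ω u v = 0) (u : Fin (n + 1) → U)
    (v : Fin (n + 3) → U) : fPoly (wedgeD D ω) u v = 0 := by
  set W : Fin (n + 3) → U := fun k => wedgeD D ω (k.removeNth v)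
  have hexpand : fPoly (wedgeD D ω) u v =
      -∑ i : Fin (n + 1), (-1) ^ (i : ℕ) * D (u i) *
          ∑ k : Fin (n + 3), (-1) ^ (k : ℕ) * (ω (Fin.snoc (i.removeNth u) (v k)) * W k) -
        (-1) ^ (n + 1) * ω u * ∑ k : Fin (n + 3), (-1) ^ (k : ℕ) * (D (v k) * W k) := by
    simp only [mul_sum, ← sum_neg_distrib]
    rw [sum_comm, ← sum_sub_distrib, fPoly]
    refine sum_congr rfl fun k _ => ?_
    rw [wedgeD_snoc, sum_neg_distrib]
    have hcomb : ∑ i : Fin (n + 1), (-1) ^ (i : ℕ) * D (u i) *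
          ((-1) ^ (k : ℕ) * (ω (Fin.snoc (i.removeNth u) (v k)) * W k)) =
        (-1) ^ (k : ℕ) * W k * ∑ i : Fin (n + 1),
          (-1) ^ (i : ℕ) * D (u i) * ω (Fin.snoc (i.removeNth u) (v k)) := by
      rw [mul_sum]; exact sum_congr rfl fun i _ => by ring
    rw [hcomb]
    ring
  rw [hexpand, sum_neg_one_pow_apply_mul_wedgeD_removeNth_eq_zero]
  simp [W, sum_neg_one_pow_snoc_mul_wedgeD_removeNth_eq_zero D ω hs]

theorem leibnizRule_wedgeD {R : Type*} [CommSemiring R] [Algebra R U] (D : Derivation R U U)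
    {ω : (Fin (n + 1) → U) → U} (hL : LeibnizRule ω) : LeibnizRule (wedgeD D ω) := by
  intro a b u
  have hsum :
      ∑ s : Fin (n + 1), (-1) ^ (s : ℕ) * (D (u s) * ω (Fin.cons (a * b) (s.removeNth u))) =
      a * ∑ s : Fin (n + 1), (-1) ^ (s : ℕ) * (D (u s) * ω (Fin.cons b (s.removeNth u))) +
        b * ∑ s : Fin (n + 1),
          (-1) ^ (s : ℕ) * (D (u s) * ω (Fin.cons a (s.removeNth u))) := by
    rw [mul_sum, mul_sum, ← sum_add_distrib]
    exact sum_congr rfl fun s _ => by rw [hL]; ring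
  rw [wedgeD_cons, wedgeD_cons, wedgeD_cons, hsum, D.leibniz, smul_eq_mul, smul_eq_mul]
  ring

end Wedge

section FundamentalIdentity

variable {R U : Type*} [CommRing R] [CommRing U] [Algebra R U] {n m : ℕ}

def IsBracketDerivation (ω : (Fin m → U) → U) (δ : U → U) : Prop :=
  ∀ w, δ (ω w) = ∑ t, ω (update w t (δ (w t)))

variable (Ω : U [⋀^Fin (n + 1)]→ₗ[R] U) (D : Derivation R U U)

theorem IsBracketDerivation.apply_snoc {Ω : U [⋀^Fin (n + 1)]→ₗ[R] U} {δ : U → U}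
    (hδ : IsBracketDerivation Ω δ) (u : Fin n → U) (x : U) :
    δ (Ω (Fin.snoc u x)) =
      ∑ r, Ω (Fin.snoc (update u r (δ (u r))) x) + Ω (Fin.snoc u (δ x)) := by
  rw [hδ, Fin.sum_univ_castSucc]
  simp only [Fin.snoc_castSucc, Fin.snoc_last, Fin.update_snoc_last, ← Fin.snoc_update]

theorem IsBracketDerivation.sum_snoc_removeNth_add_apply_eq_zero
    (hDΩ : IsBracketDerivation Ω D) (u : Fin (n + 1) → U) :
    ∑ i : Fin (n + 1), Ω (Fin.snoc (i.removeNth u) ((-1) ^ (i : ℕ) * D (u i))) +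
      D ((-1) ^ (n + 1) * Ω u) = 0 := by
  have hterm (i : Fin (n + 1)) : Ω (Fin.snoc (i.removeNth u) ((-1) ^ (i : ℕ) * D (u i))) =
      (-1) ^ n * Ω (update u i (D (u i))) := by
    rw [Ω.map_snoc_eq_neg_one_pow_mul_cons, Ω.map_cons_neg_one_pow_mul,
      Ω.map_update_eq_neg_one_pow_mul_cons]
  rw [map_neg_one_pow_mul, hDΩ, sum_congr rfl fun i _ => hterm i, ← mul_sum, pow_succ]
  ring

/-- The contribution of the term `D x · Ω w` of `D ∧ Ω` to the failure of `L` to be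
a derivation of `D ∧ Ω`; see `sub_sum_wedgeD_update`. -/
def wedgeDefect (x : U) (w : Fin (n + 1) → U) : (U → U) →+ U where
  toFun L := L (D x * Ω w) - D (L x) * Ω w - D x * ∑ t, Ω (update w t (L (w t)))
  map_zero' := by simp
  map_add' L₁ L₂ := by
    simp only [Pi.add_apply, map_add, Ω.map_update_add, sum_add_distrib]
    ring

theorem sub_sum_wedgeD_update (L : U →+ U) (v : Fin (n + 2) → U) :
    L (wedgeD D Ω v) - ∑ k, wedgeD D Ω (update v k (L (v k))) =
      ∑ j : Fin (n + 2), (-1) ^ (j : ℕ) * wedgeDefect Ω D (v j) (j.removeNth v) L := by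
  rw [sum_wedgeD_update, wedgeD, map_sum, ← sum_sub_distrib]
  refine sum_congr rfl fun j _ => ?_
  simp only [map_neg_one_pow_mul, wedgeDefect, AddMonoidHom.coe_mk, ZeroHom.coe_mk,
    Fin.removeNth_apply]
  ring

theorem wedgeDefect_smul (hL : LeibnizRule Ω) (δ : U → U)
    (hδ : ∀ a b, δ (a * b) = a * δ b + b * δ a) (hδΩ : IsBracketDerivation Ω δ)
    (c x : U) (w : Fin (n + 1) → U) :
    wedgeDefect Ω D x w (c • δ) = c * Ω w * (δ (D x) - D (δ x)) - D c * δ x * Ω w -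
      D x * ∑ t, δ (w t) * Ω (update w t c) := by
  simp only [wedgeDefect, AddMonoidHom.coe_mk, ZeroHom.coe_mk, Pi.smul_apply, smul_eq_mul, hδ,
    hδΩ w, D.leibniz, Ω.map_update_mul hL, sum_add_distrib, ← mul_sum]
  ring

theorem sum_wedgeDefect_smul_derivation (hL : LeibnizRule Ω) (hDΩ : IsBracketDerivation Ω D)
    (c : U) (v : Fin (n + 2) → U) :
    ∑ j : Fin (n + 2), (-1) ^ (j : ℕ) * wedgeDefect Ω D (v j) (j.removeNth v) (c • ⇑D) =
      -(D c * wedgeD D Ω v) := by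
  have hpairs : ∑ j : Fin (n + 2), (-1) ^ (j : ℕ) *
      (D (v j) * ∑ t, D (j.removeNth v t) * Ω (update (j.removeNth v) t c)) = 0 := by
    rw [← Fin.sum_sum_neg_one_pow_removeNth_removeNth_eq_zero
      (fun a b w => D a * D b * Ω (Fin.cons c w)) (fun a b w => by ring) v]
    refine sum_congr rfl fun j _ => ?_
    rw [mul_sum, mul_sum]
    refine sum_congr rfl fun t _ => ?_
    rw [Ω.map_update_eq_neg_one_pow_mul_cons, pow_add, Fin.removeNth_apply]
    ring
  have hD (a b : U) : D (a * b) = a * D b + b * D a := by rw [D.leibniz, smul_eq_mul, smul_eq_mul]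
  simp only [wedgeDefect_smul Ω D hL D hD hDΩ, sub_self, mul_zero, zero_sub, mul_sub,
    sum_sub_distrib, hpairs, sub_zero]
  simp only [wedgeD, mul_sum, ← sum_neg_distrib]
  exact sum_congr rfl fun j _ => by ring

theorem sum_wedgeDefect_smul_bracket (hL : LeibnizRule Ω) (hFI : FundamentalIdentityI Ω)
    (hs : ∀ u v, fPoly Ω u v = 0) (hDΩ : IsBracketDerivation Ω D) (u : Fin n → U) (c : U)
    (v : Fin (n + 2) → U) :
    ∑ j : Fin (n + 2), (-1) ^ (j : ℕ) *
        wedgeDefect Ω D (v j) (j.removeNth v) (c • fun x => Ω (Fin.snoc u x)) =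
      -(Ω (Fin.snoc u c) * wedgeD D Ω v) := by
  have hcomm (x : U) : Ω (Fin.snoc u (D x)) - D (Ω (Fin.snoc u x)) =
      -∑ r, Ω (Fin.snoc (update u r (D (u r))) x) := by
    rw [hDΩ.apply_snoc]; ring
  have h₁ : ∑ j : Fin (n + 2), (-1) ^ (j : ℕ) *
      ((∑ r, Ω (Fin.snoc (update u r (D (u r))) (v j))) * Ω (j.removeNth v)) = 0 := by
    simp only [sum_mul, mul_sum]
    rw [sum_comm]
    exact sum_eq_zero fun r _ => sum_neg_one_pow_mul_snoc_mul_removeNth_eq_zero hs _ v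
  have h₂ := sum_neg_one_pow_mul_snoc_mul_removeNth_eq_zero hs u v
  simp only [wedgeDefect_smul Ω D hL (fun x => Ω (Fin.snoc u x)) (Ω.map_snoc_mul hL u) (hFI u),
    hcomm, sum_snoc_mul_update_eq Ω hs]
  calc _ = ∑ j : Fin (n + 2),
        (-(c * ((-1) ^ (j : ℕ) * ((∑ r, Ω (Fin.snoc (update u r (D (u r))) (v j))) *
            Ω (j.removeNth v)))) -
          D c * ((-1) ^ (j : ℕ) * (Ω (Fin.snoc u (v j)) * Ω (j.removeNth v))) -
          Ω (Fin.snoc u c) * ((-1) ^ (j : ℕ) * (D (v j) * Ω (j.removeNth v)))) :=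
        sum_congr rfl fun j _ => by ring
    _ = -(Ω (Fin.snoc u c) * wedgeD D Ω v) := by
        rw [sum_sub_distrib, sum_sub_distrib, sum_neg_distrib, ← mul_sum, ← mul_sum,
          ← mul_sum, h₁, h₂, wedgeD]
        ring

theorem fundamentalIdentityI_wedgeD (hL : LeibnizRule Ω) (hFI : FundamentalIdentityI Ω)
    (hs : ∀ u v, fPoly Ω u v = 0) (hDΩ : IsBracketDerivation Ω D) :
    FundamentalIdentityI (wedgeD D Ω) := by
  intro u v
  let L : U →+ U := AddMonoidHom.mk' (fun x => wedgeD D Ω (Fin.snoc u x)) fun x y => by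
    simpa [Fin.update_snoc_last, coe_wedgeAlternatingMap] using
      (wedgeAlternatingMap Ω D).map_update_add (Fin.snoc u 0) (Fin.last _) x y
  have hL_eq : ⇑L = ∑ i : Fin (n + 1), ((-1) ^ (i : ℕ) * D (u i)) •
      (fun x => Ω (Fin.snoc (i.removeNth u) x)) + ((-1) ^ (n + 1) * Ω u) • ⇑D := by
    ext x
    simp [L, wedgeD_snoc, Finset.sum_apply]
  rw [← sub_eq_zero]
  change L (wedgeD D Ω v) - ∑ k, wedgeD D Ω (update v k (L (v k))) = 0
  rw [sub_sum_wedgeD_update, hL_eq]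
  simp only [map_add, map_sum, mul_add, mul_sum, sum_add_distrib]
  rw [sum_comm]
  simp only [sum_wedgeDefect_smul_bracket Ω D hL hFI hs hDΩ,
    sum_wedgeDefect_smul_derivation Ω D hL hDΩ]
  rw [sum_neg_distrib, ← sum_mul, ← neg_add, ← add_mul,
    hDΩ.sum_snoc_removeNth_add_apply_eq_zero, zero_mul, neg_zero]

end FundamentalIdentity

theorem wedgeD_strong_LiePoisson_general {K : Type*} [Field K]
    {U : Type*} [CommRing U] [Algebra K U] {n : ℕ}
    (ω : (Fin (n + 1) → U) → U)
    (hml : IsMultilinear K ω) (halt : IsAlternating ω)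
    (hFI : FundamentalIdentityI ω) (hLeib : LeibnizRule ω)
    (hstrong : ∀ (u : Fin n → U) (v : Fin (n + 2) → U), fPoly ω u v = 0)
    (D : Derivation K U U)
    (hDω : ∀ u : Fin (n + 1) → U,
      D (ω u) = ∑ i : Fin (n + 1), ω (Function.update u i (D (u i)))) :
    IsMultilinear K (wedgeD D ω) ∧ IsAlternating (wedgeD D ω) ∧
      FundamentalIdentityI (wedgeD D ω) ∧ LeibnizRule (wedgeD D ω) ∧
      ∀ (u : Fin (n + 1) → U) (v : Fin (n + 3) → U), fPoly (wedgeD D ω) u v = 0 := by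
  obtain ⟨Ω, rfl⟩ := halt.exists_alternatingMap hml
  have hwedge : wedgeD D Ω = ⇑(wedgeAlternatingMap Ω D) := (coe_wedgeAlternatingMap Ω D).symm
  exact ⟨hwedge ▸ (wedgeAlternatingMap Ω D).isMultilinear,
    hwedge ▸ (wedgeAlternatingMap Ω D).isAlternating,
    fundamentalIdentityI_wedgeD Ω D hLeib hFI hstrong hDω, leibnizRule_wedgeD D hLeib,
    fPoly_wedgeD_eq_zero D Ω hstrong⟩

/-- If `(U,·,ω)` is a strong `(n+1)`-Lie-Poisson algebra over a field of characteristic `0`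
and `D` is simultaneously a derivation of `·` and of `ω`, then `(U,·,D∧ω)` is a strong
`(n+2)`-Lie-Poisson algebra. -/
theorem wedgeD_strong_LiePoisson {K : Type*} [Field K] [CharZero K]
    {U : Type*} [CommRing U] [Algebra K U] {n : ℕ}
    (ω : (Fin (n + 1) → U) → U)
    (hml : IsMultilinear K ω) (halt : IsAlternating ω)
    (hFI : FundamentalIdentityI ω) (hLeib : LeibnizRule ω)
    (hstrong : ∀ (u : Fin n → U) (v : Fin (n + 2) → U), fPoly ω u v = 0)
    (D : Derivation K U U)
    (hDω : ∀ u : Fin (n + 1) → U,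
      D (ω u) = ∑ i : Fin (n + 1), ω (Function.update u i (D (u i)))) :
    IsMultilinear K (wedgeD D ω) ∧ IsAlternating (wedgeD D ω) ∧
      FundamentalIdentityI (wedgeD D ω) ∧ LeibnizRule (wedgeD D ω) ∧
      ∀ (u : Fin (n + 1) → U) (v : Fin (n + 3) → U), fPoly (wedgeD D ω) u v = 0 :=
  wedgeD_strong_LiePoisson_general ω hml halt hFI hLeib hstrong D hDω
end

section
/- Let U be an associative commutative algebra over a field K of characteristic 0 equipped with pairwise commuting derivations ∂_1,...,∂_n. Then: (1) Jac_{n+1}^W satisfies the Fundamental Identity of type I for (n+1)-ary multiplications, i.e. (U, Jac_{n+1}^W) is an (n+1)-Lie algebra; (2) f^{Jac_{n+1}^W} = 0, i.e. Σ_{i=1}^{n+2} (−1)^i Jac_{n+1}^W(u_1,...,u_n,v_i)·Jac_{n+1}^W(v_1,...,v̂_i,...,v_{n+2}) = 0 for all arguments; and (3) if U has a unit 1, then Jac_{n+1}^W(u·u',u_1,...,u_n) − u·Jac_{n+1}^W(u',u_1,...,u_n) − u'·Jac_{n+1}^W(u,u_1,...,u_n) = −(u·u')·Jac_{n+1}^W(1,u_1,...,u_n).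 -/
open Finset
open Matrix

section Aux

variable {K : Type*} [Field K] {U : Type*} [CommRing U] [Algebra K U]

theorem aux_deriv_prod (D : Derivation K U U) {ι : Type*} [DecidableEq ι]
    (s : Finset ι) (f : ι → U) :
    D (∏ i ∈ s, f i) = ∑ i ∈ s, (∏ j ∈ s.erase i, f j) * D (f i) := by
  induction s using Finset.induction_on with
  | empty => simp
  | @insert a s ha ih =>
    rw [Finset.prod_insert ha, Derivation.leibniz, smul_eq_mul, smul_eq_mul, ih,
      Finset.mul_sum, Finset.sum_insert ha, Finset.erase_insert ha]
    rw [add_comm]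
    congr 1
    refine Finset.sum_congr rfl fun i hi => ?_
    have hia : a ≠ i := by rintro rfl; exact ha hi
    rw [Finset.erase_insert_of_ne hia,
      Finset.prod_insert (fun h => ha (Finset.mem_of_mem_erase h)), mul_assoc]

theorem aux_deriv_det (D : Derivation K U U) {m : ℕ} (M : Matrix (Fin m) (Fin m) U) :
    D M.det = ∑ r, (M.updateRow r fun j => D (M r j)).det := by
  rw [Matrix.det_apply, map_sum]
  have step : ∀ σ : Equiv.Perm (Fin m),
      D (Equiv.Perm.sign σ • ∏ i, M (σ i) i)
        = ∑ c, Equiv.Perm.sign σ •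
            ((∏ j ∈ Finset.univ.erase c, M (σ j) j) * D (M (σ c) c)) := by
    intro σ
    rw [Units.smul_def, map_zsmul, aux_deriv_prod, ← Finset.smul_sum]
    simp [Units.smul_def]
  have key : ∀ (σ : Equiv.Perm (Fin m)) (c : Fin m),
      (∏ j ∈ Finset.univ.erase c, M (σ j) j) * D (M (σ c) c)
        = ∏ i, (M.updateRow (σ c) fun j => D (M (σ c) j)) (σ i) i := by
    intro σ c
    rw [← Finset.mul_prod_erase Finset.univ _ (Finset.mem_univ c),
      Matrix.updateRow_self, mul_comm]
    congr 1
    refine Finset.prod_congr rfl fun i hi => ?_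
    have : σ i ≠ σ c := fun h => (Finset.mem_erase.mp hi).1 (σ.injective h)
    rw [Matrix.updateRow_ne this]
  simp_rw [step, key]
  have reind : ∀ σ : Equiv.Perm (Fin m),
      (∑ c, Equiv.Perm.sign σ • ∏ i, (M.updateRow (σ c) fun j => D (M (σ c) j)) (σ i) i)
        = ∑ r, Equiv.Perm.sign σ • ∏ i, (M.updateRow r fun j => D (M r j)) (σ i) i := by
    intro σ
    exact Equiv.sum_comp σ fun r => Equiv.Perm.sign σ • ∏ i, (M.updateRow r fun j => D (M r j)) (σ i) i
  simp_rw [reind]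
  rw [Finset.sum_comm]
  exact Finset.sum_congr rfl fun r _ => (Matrix.det_apply _).symm

theorem aux_single_decomp {m : ℕ} (b : Fin m → U) :
    b = ∑ k, b k • (Pi.single k (1 : U) : Fin m → U) := by
  ext j
  simp [Pi.single_apply, eq_comm]

theorem aux_trace_lemma {m : ℕ} (M Q : Matrix (Fin m) (Fin m) U) :
    ∑ j, (M.updateRow j fun a => ∑ k, Q a k * M j k).det = Matrix.trace Q * M.det := by
  have expand : ∀ j, (M.updateRow j fun a => ∑ k, Q a k * M j k).det
      = ∑ a, ∑ k, Matrix.adjugate M a j * (Q a k * M j k) := by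
    intro j
    rw [← Matrix.cramer_transpose_apply, Matrix.cramer_eq_adjugate_mulVec,
      ← Matrix.adjugate_transpose]
    simp [Matrix.mulVec, dotProduct, Matrix.transpose_apply, Finset.mul_sum]
  simp_rw [expand]
  have swap : ∑ j, ∑ a, ∑ k, Matrix.adjugate M a j * (Q a k * M j k)
      = ∑ a, ∑ k, Q a k * ∑ j, Matrix.adjugate M a j * M j k := by
    rw [Finset.sum_comm]
    refine Finset.sum_congr rfl fun a _ => ?_
    rw [Finset.sum_comm]
    refine Finset.sum_congr rfl fun k _ => ?_
    rw [Finset.mul_sum]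
    refine Finset.sum_congr rfl fun j _ => by ring
  rw [swap]
  have adjmul : ∀ a k, ∑ j, Matrix.adjugate M a j * M j k
      = if a = k then M.det else 0 := by
    intro a k
    have := congrFun (congrFun (Matrix.adjugate_mul M) a) k
    simpa [Matrix.mul_apply, Matrix.one_apply, Matrix.smul_apply, mul_ite] using this
  simp_rw [adjmul]
  simp [Matrix.trace, Matrix.diag, Finset.sum_mul]

end Aux

/-- The map `Jac_{n+1}^W(u_0,…,u_n)`: the determinant of the `(n+1)×(n+1)` matrix whose
first row is `(u_0,…,u_n)` and whose `(i+1)`-th row is `(∂_i u_0,…,∂_i u_n)`. -/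

noncomputable def jacW {K : Type*} [Field K] {U : Type*} [CommRing U] [Algebra K U] {n : ℕ}
    (pd : Fin n → Derivation K U U) (u : Fin (n + 1) → U) : U :=
  Matrix.det (Matrix.of fun i j => Fin.cases (u j) (fun k => pd k (u j)) i)

section JacW
variable {K : Type*} [Field K] {U : Type*} [CommRing U] [Algebra K U] {n : ℕ}
variable (pd : Fin n → Derivation K U U)

def jcol (w : U) : Fin (n + 1) → U := fun i => Fin.cases w (fun k => pd k w) i

@[simp] theorem jcol_zero (w : U) : jcol pd w 0 = w := rfl
@[simp] theorem jcol_succ (w : U) (k : Fin n) : jcol pd w k.succ = pd k w := rfl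

def jmat (u : Fin (n + 1) → U) : Matrix (Fin (n + 1)) (Fin (n + 1)) U :=
  Matrix.of fun j i => jcol pd (u j) i

theorem jmat_row (u : Fin (n + 1) → U) (j : Fin (n + 1)) : jmat pd u j = jcol pd (u j) := rfl

theorem jacW_eq_det (u : Fin (n + 1) → U) : jacW pd u = (jmat pd u).det := by
  rw [← Matrix.det_transpose (jmat pd u)]
  rfl

theorem jmat_update (u : Fin (n + 1) → U) (j : Fin (n + 1)) (w : U) :
    jmat pd (Function.update u j w) = (jmat pd u).updateRow j (jcol pd w) := by
  ext a i
  rw [Matrix.updateRow_apply]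
  by_cases h : a = j <;> simp [jmat, jcol, Function.update_apply, h]

theorem pd_jcol (hcomm : ∀ i j (u : U), pd i (pd j u) = pd j (pd i u))
    (m : Fin n) (w : U) (k : Fin (n + 1)) :
    pd m (jcol pd w k) = jcol pd (pd m w) k := by
  induction k using Fin.cases with
  | zero => simp
  | succ r => simp [hcomm m r w]

theorem jacW_update (v : Fin (n + 1) → U) (j : Fin (n + 1)) (w : U) :
    jacW pd (Function.update v j w) = Matrix.cramer (jmat pd v)ᵀ (jcol pd w) j := by
  rw [jacW_eq_det, jmat_update, Matrix.cramer_transpose_apply]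

theorem jacW_snoc (u : Fin n → U) (w : U) :
    jacW pd (Fin.snoc u w)
      = Matrix.cramer (jmat pd (Fin.snoc u 0))ᵀ (jcol pd w) (Fin.last n) := by
  have h : Function.update (Fin.snoc u (0 : U)) (Fin.last n) w = (Fin.snoc u w : Fin (n + 1) → U) :=
    by apply Fin.update_snoc_last
  rw [← h]
  exact jacW_update pd _ _ _

noncomputable def jc (u : Fin n → U) (k : Fin (n + 1)) : U :=
  ((jmat pd (Fin.snoc u 0)).updateRow (Fin.last n) (Pi.single k 1)).det

theorem aux_single_decomp' {m : ℕ} (b : Fin m → U) :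
    b = ∑ k, b k • (Pi.single k (1 : U) : Fin m → U) := by
  ext j
  simp [Pi.single_apply, eq_comm]

theorem jacW_snoc_eq (u : Fin n → U) (w : U) :
    jacW pd (Fin.snoc u w) = ∑ k, jcol pd w k * jc pd u k := by
  rw [jacW_snoc]
  conv_lhs => rw [aux_single_decomp' (jcol pd w)]
  rw [map_sum, Finset.sum_apply]
  refine Finset.sum_congr rfl fun k _ => ?_
  rw [LinearMap.map_smul, Pi.smul_apply, smul_eq_mul, Matrix.cramer_transpose_apply]
  rfl

theorem aux_det_swap {m : ℕ} (M : Matrix (Fin m) (Fin m) U) {i j : Fin m} (h : i ≠ j)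
    (x y : Fin m → U) :
    ((M.updateRow i x).updateRow j y).det = -(((M.updateRow i y).updateRow j x).det) := by
  have hswap : (M.updateRow i y).updateRow j x
      = ((M.updateRow i x).updateRow j y).submatrix (Equiv.swap i j) id := by
    ext a b
    simp only [Matrix.submatrix_apply, id_eq, Matrix.updateRow_apply, Equiv.swap_apply_def]
    split_ifs <;> simp_all
  rw [hswap, Matrix.det_permute, Equiv.Perm.sign_swap h]
  simp

theorem aux_sum_symm_antisymm [CharZero K] {ι : Type*} [Fintype ι]
    (S T : ι → ι → U) (hS : ∀ a b, S a b = S b a) (hT : ∀ a b, T a b = -T b a) :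
    ∑ a, ∑ b, S a b * T a b = 0 := by
  set Z := ∑ a, ∑ b, S a b * T a b with hZ
  have h2 : Z = ∑ a, ∑ b, S b a * T b a := Finset.sum_comm
  have key : Z + Z = 0 := by
    nth_rewrite 2 [h2]
    rw [← Finset.sum_add_distrib]
    refine Finset.sum_eq_zero fun a _ => ?_
    rw [← Finset.sum_add_distrib]
    refine Finset.sum_eq_zero fun b _ => ?_
    rw [hS b a, hT b a]; ring
  have h3 : (2 : K) • Z = 0 := by rw [two_smul]; exact key
  calc Z = (2 : K)⁻¹ • ((2 : K) • Z) := by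
        rw [smul_smul, inv_mul_cancel₀ (by norm_num : (2:K) ≠ 0), one_smul]
    _ = 0 := by rw [h3, smul_zero]

end JacW

section LemmaC
variable {K : Type*} [Field K] {U : Type*} [CommRing U] [Algebra K U] {n : ℕ}
variable (pd : Fin n → Derivation K U U)

theorem jc_expand (N : Matrix (Fin (n+1)) (Fin (n+1)) U) (j : Fin n) (b : Fin (n + 1))
    (x : Fin (n + 1) → U) :
    ((N.updateRow (Fin.last n) (Pi.single b 1)).updateRow j.castSucc x).det
      = ∑ a, x a *
        ((N.updateRow (Fin.last n) (Pi.single b 1)).updateRow j.castSucc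
          (Pi.single a 1)).det := by
  rw [← Matrix.cramer_transpose_apply]
  conv_lhs => rw [aux_single_decomp' x]
  rw [map_sum, Finset.sum_apply]
  exact Finset.sum_congr rfl fun a _ => by
    rw [LinearMap.map_smul, Pi.smul_apply, smul_eq_mul, Matrix.cramer_transpose_apply]

theorem jc_div [CharZero K] (hcomm : ∀ i j (u : U), pd i (pd j u) = pd j (pd i u))
    (u : Fin n → U) :
    ∑ m : Fin n, pd m (jc pd u m.succ) = -(n • jc pd u 0) := by
  set N : Matrix (Fin (n+1)) (Fin (n+1)) U := jmat pd (Fin.snoc u 0) with hN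
  have hNrow : ∀ j : Fin n, N j.castSucc = jcol pd (u j) := by
    intro j
    rw [hN, jmat_row]
    congr 1
    simp
  have hne : ∀ j : Fin n, (Fin.last n : Fin (n+1)) ≠ j.castSucc :=
    fun j => ((Fin.castSucc_lt_last j).ne).symm
  set T : Fin n → Fin (n + 1) → Fin (n + 1) → U := fun j a b =>
    ((N.updateRow (Fin.last n) (Pi.single b 1)).updateRow j.castSucc (Pi.single a 1)).det
    with hT
  set S : Fin n → Fin (n + 1) → Fin (n + 1) → U := fun j a b =>
    jcol pd (jcol pd (u j) b) a with hS
  -- Step 1 : differentiate the cofactor determinant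
  have step1 : ∀ m : Fin n, pd m (jc pd u m.succ)
      = ∑ j : Fin n, ∑ a, S j a m.succ * T j a m.succ := by
    intro m
    rw [jc, aux_deriv_det (pd m), Fin.sum_univ_castSucc]
    have hlastzero :
        ((N.updateRow (Fin.last n) (Pi.single m.succ 1)).updateRow (Fin.last n)
          (fun a => pd m ((N.updateRow (Fin.last n) (Pi.single m.succ 1)) (Fin.last n) a))).det
          = 0 := by
      refine Matrix.det_eq_zero_of_row_eq_zero (Fin.last n) fun a => ?_
      rw [Matrix.updateRow_self, Matrix.updateRow_self, Pi.single_apply]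
      split_ifs <;> simp
    rw [hlastzero, add_zero]
    refine Finset.sum_congr rfl fun j _ => ?_
    have hrow : (N.updateRow (Fin.last n) (Pi.single m.succ 1)) j.castSucc
        = jcol pd (u j) := by
      rw [Matrix.updateRow_ne (hne j).symm, hNrow]
    rw [hrow]
    have hder : (fun a => pd m (jcol pd (u j) a)) = jcol pd (pd m (u j)) :=
      funext fun a => pd_jcol pd hcomm m (u j) a
    rw [hder, jc_expand]
    refine Finset.sum_congr rfl fun a _ => rfl
  -- symmetry of S, antisymmetry of T
  have hSsymm : ∀ (j : Fin n) (a b : Fin (n+1)), S j a b = S j b a := by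
    intro j a b
    rw [hS]
    induction a using Fin.cases with
    | zero => induction b using Fin.cases <;> simp
    | succ r => induction b using Fin.cases with
      | zero => simp
      | succ s => simp [hcomm r s (u j)]
  have hTanti : ∀ (j : Fin n) (a b : Fin (n+1)), T j a b = -T j b a := by
    intro j a b
    exact aux_det_swap N (hne j) (Pi.single b 1) (Pi.single a 1)
  -- the b = 0 term
  have hF0 : ∀ j : Fin n, ∑ a, S j a 0 * T j a 0 = jc pd u 0 := by
    intro j
    have hx : ∀ a, S j a 0 = jcol pd (u j) a := fun a => rfl
    have := (jc_expand (n := n) N j 0 (jcol pd (u j))).symm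
    simp_rw [hx]
    rw [this]
    have heq : (N.updateRow (Fin.last n) (Pi.single (0 : Fin (n+1)) 1)).updateRow j.castSucc
        (jcol pd (u j)) = N.updateRow (Fin.last n) (Pi.single 0 1) := by
      have h1 : (N.updateRow (Fin.last n) (Pi.single (0 : Fin (n+1)) (1:U))) j.castSucc
          = jcol pd (u j) := by rw [Matrix.updateRow_ne (hne j).symm, hNrow]
      conv_lhs => rw [← h1]
      exact Matrix.updateRow_eq_self _ _
    rw [heq, jc]
  -- per-j full-sum vanishing
  have hvanish : ∀ j : Fin n, ∑ b, ∑ a, S j a b * T j a b = 0 := by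
    intro j
    rw [Finset.sum_comm]
    exact aux_sum_symm_antisymm (K := K) (S j) (T j) (hSsymm j) (hTanti j)
  have hsuccsum : ∀ j : Fin n, ∑ m : Fin n, ∑ a, S j a m.succ * T j a m.succ
      = -(jc pd u 0) := by
    intro j
    have := hvanish j
    rw [Fin.sum_univ_succ] at this
    rw [hF0 j] at this
    linear_combination this
  calc ∑ m : Fin n, pd m (jc pd u m.succ)
      = ∑ m : Fin n, ∑ j : Fin n, ∑ a, S j a m.succ * T j a m.succ :=
        Finset.sum_congr rfl fun m _ => step1 m
    _ = ∑ j : Fin n, ∑ m : Fin n, ∑ a, S j a m.succ * T j a m.succ := Finset.sum_comm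
    _ = ∑ _j : Fin n, -(jc pd u 0) := Finset.sum_congr rfl fun j _ => hsuccsum j
    _ = -(n • jc pd u 0) := by simp [Finset.sum_const]

end LemmaC

section Parts
variable {K : Type*} [Field K] [CharZero K] {U : Type*} [CommRing U] [Algebra K U] {n : ℕ}
variable (pd : Fin n → Derivation K U U)

theorem part1 (hcomm : ∀ i j (u : U), pd i (pd j u) = pd j (pd i u)) :
    FundamentalIdentityI (jacW pd) := by
  intro u v
  set V : Matrix (Fin (n+1)) (Fin (n+1)) U := jmat pd v with hV
  set c : Fin (n + 1) → U := jc pd u with hc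
  set Q : Fin (n + 1) → Fin (n + 1) → U :=
    fun a k => Fin.cases 0 (fun m => pd m (c k)) a with hQ
  set ρ : Fin (n + 1) → Fin (n + 1) → U := fun j a => ∑ k, Q a k * V j k with hρ
  have hVrow : ∀ j, V j = jcol pd (v j) := fun j => rfl
  -- expansion of the inner bracket
  have hD : ∀ w : U, jacW pd (Fin.snoc u w) = ∑ k, jcol pd w k * c k :=
    fun w => jacW_snoc_eq pd u w
  -- derivative of the determinant of V
  have hpdJ : ∀ m : Fin n, pd m V.det
      = ∑ j, Matrix.cramer Vᵀ (jcol pd (pd m (v j))) j := by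
    intro m
    rw [aux_deriv_det (pd m)]
    refine Finset.sum_congr rfl fun j _ => ?_
    rw [Matrix.cramer_transpose_apply]
    have hrow : (fun a => pd m (V j a)) = jcol pd (pd m (v j)) := funext fun a => by
      rw [hVrow j]; exact pd_jcol pd hcomm m (v j) a
    rw [hrow]
  -- decomposition of the column of the inner bracket values
  have hcolD : ∀ j, jcol pd (jacW pd (Fin.snoc u (v j)))
      = (c 0 • jcol pd (v j) + ∑ m : Fin n, c m.succ • jcol pd (pd m (v j))) + ρ j := by
    intro j
    funext a
    induction a using Fin.cases with
    | zero =>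
      simp only [Pi.add_apply, Pi.smul_apply, Finset.sum_apply, smul_eq_mul,
        jcol_zero, hρ, hQ]
      rw [hD (v j), Fin.sum_univ_succ]
      simp [mul_comm]
    | succ r =>
      simp only [Pi.add_apply, Pi.smul_apply, Finset.sum_apply, smul_eq_mul, jcol_succ, hρ]
      rw [hD (v j), map_sum]
      have hterm : ∀ k, pd r (jcol pd (v j) k * c k)
          = jcol pd (v j) k * pd r (c k) + c k * pd r (jcol pd (v j) k) := by
        intro k
        rw [Derivation.leibniz, smul_eq_mul, smul_eq_mul]
      simp_rw [hterm]
      rw [Finset.sum_add_distrib]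
      have h1 : ∑ k, c k * pd r (jcol pd (v j) k)
          = c 0 * pd r (v j) + ∑ m : Fin n, c m.succ * pd r (pd m (v j)) := by
        rw [Fin.sum_univ_succ]
        simp only [jcol_zero, jcol_succ]
      have h2 : ∑ k, jcol pd (v j) k * pd r (c k) = ∑ k, Q r.succ k * V j k := by
        refine Finset.sum_congr rfl fun k _ => ?_
        simp only [hQ, Fin.cases_succ, hVrow j]
        ring
      rw [h1, h2]
      have h3 : ∑ m : Fin n, c m.succ * pd r (pd m (v j))
          = ∑ m : Fin n, c m.succ * jcol pd (pd m (v j)) r.succ := by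
        refine Finset.sum_congr rfl fun m _ => ?_
        rw [jcol_succ, hcomm r m (v j)]
      rw [h3]
      ring
  -- main computation
  rw [hD (jacW pd v), Fin.sum_univ_succ]
  simp only [jcol_zero, jcol_succ]
  rw [jacW_eq_det pd v, ← hV]
  simp_rw [hpdJ]
  -- rewrite RHS
  have hRHSterm : ∀ j, jacW pd (Function.update v j (jacW pd (Fin.snoc u (v j))))
      = c 0 * V.det + (∑ m : Fin n, c m.succ * Matrix.cramer Vᵀ (jcol pd (pd m (v j))) j)
        + Matrix.cramer Vᵀ (ρ j) j := by
    intro j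
    rw [jacW_update, ← hV, hcolD j, map_add, map_add, Pi.add_apply, Pi.add_apply]
    congr 2
    · rw [LinearMap.map_smul, Pi.smul_apply, smul_eq_mul]
      congr 1
      rw [← hVrow j, Matrix.cramer_transpose_apply, Matrix.updateRow_eq_self]
    · rw [map_sum, Finset.sum_apply]
      refine Finset.sum_congr rfl fun m _ => ?_
      rw [LinearMap.map_smul, Pi.smul_apply, smul_eq_mul]
  simp_rw [hRHSterm]
  -- the ρ/trace part
  have htrace : ∑ j, Matrix.cramer Vᵀ (ρ j) j = -((n : U) * c 0) * V.det := by
    have := aux_trace_lemma V (Matrix.of Q)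
    have heq : ∀ j, Matrix.cramer Vᵀ (ρ j) j
        = (V.updateRow j fun a => ∑ k, (Matrix.of Q) a k * V j k).det := by
      intro j
      rw [Matrix.cramer_transpose_apply]
      rfl
    simp_rw [heq]
    rw [this]
    have htr : Matrix.trace (Matrix.of Q) = -((n : U) * c 0) := by
      rw [Matrix.trace]
      rw [Fin.sum_univ_succ]
      have h0 : Matrix.diag (Matrix.of Q) 0 = 0 := rfl
      have hsucc : ∀ m : Fin n, Matrix.diag (Matrix.of Q) m.succ = pd m (c m.succ) := by
        intro m; simp [Matrix.diag, hQ]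
      rw [h0, zero_add]
      simp_rw [hsucc]
      rw [jc_div pd hcomm u, ← hc, nsmul_eq_mul]
    rw [htr]
  rw [Finset.sum_add_distrib, Finset.sum_add_distrib, htrace, Finset.sum_const,
    Finset.card_univ, Fintype.card_fin, nsmul_eq_mul]
  rw [Finset.sum_comm]
  have hss : (∑ x : Fin n, (∑ j : Fin (n+1), Matrix.cramer Vᵀ (jcol pd (pd x (v j))) j) * c x.succ)
      = ∑ y : Fin n, ∑ x : Fin (n+1), c y.succ * Matrix.cramer Vᵀ (jcol pd (pd y (v x))) x := by
    refine Finset.sum_congr rfl fun m _ => ?_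
    rw [Finset.sum_mul]
    exact Finset.sum_congr rfl fun j _ => by ring
  rw [hss]
  push_cast
  ring
theorem part2 (u : Fin n → U) (v : Fin (n + 2) → U) : fPoly (jacW pd) u v = 0 := by
  set N := jmat pd (Fin.snoc u 0) with hN
  have hvec : (∑ i : Fin (n + 2),
      ((-1 : U) ^ ((i : ℕ) + 1) * jacW pd (i.removeNth v)) • jcol pd (v i))
        = (0 : Fin (n + 1) → U) := by
    refine funext fun a => ?_
    rw [Finset.sum_apply, Pi.zero_apply]
    simp only [Pi.smul_apply, smul_eq_mul]
    set P : Matrix (Fin (n + 2)) (Fin (n + 2)) U :=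
      Matrix.of fun r i => Fin.cases (jcol pd (v i) a) (fun b => jcol pd (v i) b) r with hP
    have hdupe : P.det = 0 := by
      refine Matrix.det_zero_of_row_eq (Fin.succ_ne_zero a).symm (funext fun i => ?_)
      simp [hP]
    have hsub : ∀ i : Fin (n + 2), (P.submatrix Fin.succ i.succAbove).det
        = jacW pd (i.removeNth v) := by
      intro i
      rw [jacW_eq_det, ← Matrix.det_transpose (jmat pd (i.removeNth v))]
      congr 1
    have hlap := Matrix.det_succ_row_zero P
    rw [hdupe] at hlap
    simp_rw [hsub] at hlap
    have hP0 : ∀ i : Fin (n + 2), P 0 i = jcol pd (v i) a := fun i => rfl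
    simp_rw [hP0] at hlap
    have hneg : ∑ i : Fin (n + 2),
        (-1 : U) ^ ((i : ℕ) + 1) * jacW pd (i.removeNth v) * jcol pd (v i) a
          = -∑ i : Fin (n + 2),
            (-1 : U) ^ (i : ℕ) * jcol pd (v i) a * jacW pd (i.removeNth v) := by
      rw [← Finset.sum_neg_distrib]
      refine Finset.sum_congr rfl fun i _ => ?_
      rw [pow_succ]
      ring
    rw [hneg, ← hlap, neg_zero]
  rw [fPoly]
  have hterm : ∀ i : Fin (n + 2),
      (-1 : U) ^ ((i : ℕ) + 1) * (jacW pd (Fin.snoc u (v i)) * jacW pd (i.removeNth v))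
        = Matrix.cramer Nᵀ
            (((-1 : U) ^ ((i : ℕ) + 1) * jacW pd (i.removeNth v)) • jcol pd (v i))
            (Fin.last n) := by
    intro i
    rw [LinearMap.map_smul, Pi.smul_apply, smul_eq_mul, hN, ← jacW_snoc pd u (v i)]
    ring
  simp_rw [hterm]
  calc ∑ i : Fin (n + 2), Matrix.cramer Nᵀ
        (((-1 : U) ^ ((i : ℕ) + 1) * jacW pd (i.removeNth v)) • jcol pd (v i)) (Fin.last n)
      = Matrix.cramer Nᵀ (∑ i : Fin (n + 2),
          ((-1 : U) ^ ((i : ℕ) + 1) * jacW pd (i.removeNth v)) • jcol pd (v i)) (Fin.last n) := by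
        rw [map_sum]
        exact (Finset.sum_apply _ _ _).symm
    _ = 0 := by rw [hvec, map_zero, Pi.zero_apply]

theorem part3 (a b : U) (u : Fin n → U) :
    jacW pd (Fin.cons (a * b) u) - a * jacW pd (Fin.cons b u)
        - b * jacW pd (Fin.cons a u) =
      -((a * b) * jacW pd (Fin.cons 1 u)) := by
  have hjac : ∀ x : U, jacW pd (Fin.cons x u)
      = Matrix.cramer (jmat pd (Fin.cons (0 : U) u))ᵀ (jcol pd x) 0 := by
    intro x
    have hupd : Function.update (Fin.cons (0 : U) u) 0 x = (Fin.cons x u : Fin (n+1) → U) := by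
      apply Fin.update_cons_zero
    rw [← hupd, jacW_update]
  have hcolmul : jcol pd (a * b)
      = a • jcol pd b + b • jcol pd a - (a * b) • jcol pd (1 : U) := by
    funext i
    induction i using Fin.cases with
    | zero =>
      simp only [Pi.sub_apply, Pi.add_apply, Pi.smul_apply, smul_eq_mul, jcol_zero]
      ring
    | succ r =>
      simp only [Pi.sub_apply, Pi.add_apply, Pi.smul_apply, smul_eq_mul, jcol_succ,
        Derivation.leibniz, Derivation.map_one_eq_zero]
      ring
  rw [hjac (a * b), hjac a, hjac b, hjac 1, hcolmul, map_sub, map_add]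
  simp only [LinearMap.map_smul, Pi.sub_apply, Pi.add_apply, Pi.smul_apply, smul_eq_mul]
  ring

end Parts

/-- For pairwise commuting derivations `∂_1,…,∂_n` of an associative commutative algebra `U`
over a field of characteristic `0`: (1) `Jac_{n+1}^W` satisfies the Fundamental Identity of
type I, so `(U, Jac_{n+1}^W)` is an `(n+1)`-Lie algebra; (2) `f^{Jac_{n+1}^W} = 0`;
(3) the unit identity holds. -/
theorem jacW_identities {K : Type*} [Field K] [CharZero K]
    {U : Type*} [CommRing U] [Algebra K U] {n : ℕ}
    (pd : Fin n → Derivation K U U)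
    (hcomm : ∀ i j (u : U), pd i (pd j u) = pd j (pd i u)) :
    FundamentalIdentityI (jacW pd) ∧
      (∀ (u : Fin n → U) (v : Fin (n + 2) → U), fPoly (jacW pd) u v = 0) ∧
      (∀ (a b : U) (u : Fin n → U),
        jacW pd (Fin.cons (a * b) u) - a * jacW pd (Fin.cons b u)
            - b * jacW pd (Fin.cons a u) =
          -((a * b) * jacW pd (Fin.cons 1 u))) :=
  ⟨part1 pd hcomm, fun u v => part2 pd u v, fun a b u => part3 pd a b u⟩
end

section
/- Let K be a field of characteristic different from 2 and 3, let V be a K-vector space, and let ω : V^3 → V be an alternating trilinear map satisfying the 3-Lie identity g^ω = 0, where g^ω(t_1,...,t_5) = ω(t_1,t_2,ω(t_3,t_4,t_5)) − ω(ω(t_1,t_2,t_3),t_4,t_5) + ω(ω(t_1,t_2,t_4),t_3,t_5) − ω(ω(t_1,t_2,t_5),t_3,t_4). Then ω also satisfies the identities h^ω = 0 and q^ω = 0, where h^ω(t_1,...,t_5) = ω(t_1,t_2,ω(t_3,t_4,t_5)) − ω(t_1,t_3,ω(t_2,t_4,t_5)) + ω(t_1,t_4,ω(t_2,t_3,t_5))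 − ω(t_1,t_5,ω(t_2,t_3,t_4)), and q^ω(t_1,...,t_5) = Σ_{1≤i<j≤4} (−1)^{i+j} ω(t_i,t_j, ω(t_{k},t_{l},t_{m})), with {k<l<m} = {1,...,5}∖{i,j}. -/
/-- Over a field of characteristic different from 2 and 3, if an alternating trilinear map
`ω : V³ → V` satisfies the 3-Lie identity `g^ω = 0`, then it also satisfies `h^ω = 0` and
`q^ω = 0`. -/
theorem three_Lie_implies_h_and_q {K : Type*} [Field K]
    (hchar2 : ringChar K ≠ 2) (hchar3 : ringChar K ≠ 3)
    {V : Type*} [AddCommGroup V] [Module K V]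
    (ω : V → V → V → V)
    -- trilinearity
    (hlin1 : ∀ (c : K) (x y b d : V), ω (c • x + y) b d = c • ω x b d + ω y b d)
    (hlin2 : ∀ (c : K) (x y a d : V), ω a (c • x + y) d = c • ω a x d + ω a y d)
    (hlin3 : ∀ (c : K) (x y a b : V), ω a b (c • x + y) = c • ω a b x + ω a b y)
    -- alternating
    (halt12 : ∀ a b : V, ω a a b = 0)
    (halt23 : ∀ a b : V, ω a b b = 0)
    (halt13 : ∀ a b : V, ω a b a = 0)
    -- the 3-Lie identity g^ω = 0
    (hg : ∀ t₁ t₂ t₃ t₄ t₅ : V,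
      ω t₁ t₂ (ω t₃ t₄ t₅) - ω (ω t₁ t₂ t₃) t₄ t₅ + ω (ω t₁ t₂ t₄) t₃ t₅
        - ω (ω t₁ t₂ t₅) t₃ t₄ = 0) :
    -- h^ω = 0
    (∀ t₁ t₂ t₃ t₄ t₅ : V,
      ω t₁ t₂ (ω t₃ t₄ t₅) - ω t₁ t₃ (ω t₂ t₄ t₅) + ω t₁ t₄ (ω t₂ t₃ t₅)
        - ω t₁ t₅ (ω t₂ t₃ t₄) = 0) ∧
    -- q^ω = 0, q^ω = Σ_{1≤i<j≤4} (−1)^{i+j} ω(t_i,t_j,ω(t_k,t_l,t_m))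
    (∀ t₁ t₂ t₃ t₄ t₅ : V,
      -ω t₁ t₂ (ω t₃ t₄ t₅) + ω t₁ t₃ (ω t₂ t₄ t₅) - ω t₁ t₄ (ω t₂ t₃ t₅)
        - ω t₂ t₃ (ω t₁ t₄ t₅) + ω t₂ t₄ (ω t₁ t₃ t₅) - ω t₃ t₄ (ω t₁ t₂ t₅) = 0) := by
  have hzero3 : ∀ a b : V, ω a b 0 = 0 := by
    intro a b
    have h := hlin3 1 0 0 a b
    simp only [one_smul, add_zero] at h
    exact (left_eq_add.mp h)
  have hneg3 : ∀ a b x : V, ω a b (-x) = -ω a b x := by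
    intro a b x
    have h := hlin3 (-1 : K) x 0 a b
    simpa [hzero3 a b] using h
  have hadd1 : ∀ x y b d : V, ω (x + y) b d = ω x b d + ω y b d := by
    intro x y b d
    have h := hlin1 1 x y b d
    simpa using h
  have hadd2 : ∀ x y a d : V, ω a (x + y) d = ω a x d + ω a y d := by
    intro x y a d
    have h := hlin2 1 x y a d
    simpa using h
  have hadd3 : ∀ x y a b : V, ω a b (x + y) = ω a b x + ω a b y := by
    intro x y a b
    have h := hlin3 1 x y a b
    simpa using h
  have sw12 : ∀ a b c : V, ω a b c = -ω b a c := by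
    intro a b c
    have h := halt12 (a + b) c
    rw [hadd1, hadd2, hadd2, halt12, halt12, zero_add, add_zero] at h
    exact eq_neg_of_add_eq_zero_left h
  have sw23 : ∀ a b c : V, ω a b c = -ω a c b := by
    intro a b c
    have h := halt23 a (b + c)
    rw [hadd2, hadd3, hadd3, halt23, halt23, zero_add, add_zero] at h
    exact eq_neg_of_add_eq_zero_left h
  have hcyc : ∀ x y z : V, ω x y z = ω y z x := by
    intro x y z
    rw [sw12 x y z, sw23 y x z, neg_neg]
  have hh : ∀ t₁ t₂ t₃ t₄ t₅ : V, ω t₁ t₂ (ω t₃ t₄ t₅) - ω t₁ t₃ (ω t₂ t₄ t₅) + ω t₁ t₄ (ω t₂ t₃ t₅) - ω t₁ t₅ (ω t₂ t₃ t₄) = 0 := by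
    intro t₁ t₂ t₃ t₄ t₅
    have e1 := hg t₁ t₂ t₃ t₄ t₅
    rw [show ω (ω t₁ t₂ t₃) t₄ t₅ = ω t₄ t₅ (ω t₁ t₂ t₃) from hcyc _ _ _] at e1
    rw [show ω (ω t₁ t₂ t₄) t₃ t₅ = ω t₃ t₅ (ω t₁ t₂ t₄) from hcyc _ _ _] at e1
    rw [show ω (ω t₁ t₂ t₅) t₃ t₄ = ω t₃ t₄ (ω t₁ t₂ t₅) from hcyc _ _ _] at e1
    have e2 := hg t₁ t₃ t₂ t₄ t₅
    rw [show ω (ω t₁ t₃ t₂) t₄ t₅ = ω t₄ t₅ (ω t₁ t₃ t₂) from hcyc _ _ _] at e2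
    rw [show ω (ω t₁ t₃ t₄) t₂ t₅ = ω t₂ t₅ (ω t₁ t₃ t₄) from hcyc _ _ _] at e2
    rw [show ω (ω t₁ t₃ t₅) t₂ t₄ = ω t₂ t₄ (ω t₁ t₃ t₅) from hcyc _ _ _] at e2
    rw [show ω t₄ t₅ (ω t₁ t₃ t₂) = -ω t₄ t₅ (ω t₁ t₂ t₃) from by rw [sw23 t₁ t₃ t₂, hneg3]] at e2
    have e3 := hg t₁ t₄ t₂ t₃ t₅
    rw [show ω (ω t₁ t₄ t₂) t₃ t₅ = ω t₃ t₅ (ω t₁ t₄ t₂) from hcyc _ _ _] at e3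
    rw [show ω (ω t₁ t₄ t₃) t₂ t₅ = ω t₂ t₅ (ω t₁ t₄ t₃) from hcyc _ _ _] at e3
    rw [show ω (ω t₁ t₄ t₅) t₂ t₃ = ω t₂ t₃ (ω t₁ t₄ t₅) from hcyc _ _ _] at e3
    rw [show ω t₃ t₅ (ω t₁ t₄ t₂) = -ω t₃ t₅ (ω t₁ t₂ t₄) from by rw [sw23 t₁ t₄ t₂, hneg3]] at e3
    rw [show ω t₂ t₅ (ω t₁ t₄ t₃) = -ω t₂ t₅ (ω t₁ t₃ t₄) from by rw [sw23 t₁ t₄ t₃, hneg3]] at e3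
    have e4 := hg t₁ t₅ t₂ t₃ t₄
    rw [show ω (ω t₁ t₅ t₂) t₃ t₄ = ω t₃ t₄ (ω t₁ t₅ t₂) from hcyc _ _ _] at e4
    rw [show ω (ω t₁ t₅ t₃) t₂ t₄ = ω t₂ t₄ (ω t₁ t₅ t₃) from hcyc _ _ _] at e4
    rw [show ω (ω t₁ t₅ t₄) t₂ t₃ = ω t₂ t₃ (ω t₁ t₅ t₄) from hcyc _ _ _] at e4
    rw [show ω t₃ t₄ (ω t₁ t₅ t₂) = -ω t₃ t₄ (ω t₁ t₂ t₅) from by rw [sw23 t₁ t₅ t₂, hneg3]] at e4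
    rw [show ω t₂ t₄ (ω t₁ t₅ t₃) = -ω t₂ t₄ (ω t₁ t₃ t₅) from by rw [sw23 t₁ t₅ t₃, hneg3]] at e4
    rw [show ω t₂ t₃ (ω t₁ t₅ t₄) = -ω t₂ t₃ (ω t₁ t₄ t₅) from by rw [sw23 t₁ t₅ t₄, hneg3]] at e4
    have e5 := hg t₂ t₃ t₁ t₄ t₅
    rw [show ω (ω t₂ t₃ t₁) t₄ t₅ = ω t₄ t₅ (ω t₂ t₃ t₁) from hcyc _ _ _] at e5
    rw [show ω (ω t₂ t₃ t₄) t₁ t₅ = ω t₁ t₅ (ω t₂ t₃ t₄) from hcyc _ _ _] at e5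
    rw [show ω (ω t₂ t₃ t₅) t₁ t₄ = ω t₁ t₄ (ω t₂ t₃ t₅) from hcyc _ _ _] at e5
    rw [show ω t₄ t₅ (ω t₂ t₃ t₁) = ω t₄ t₅ (ω t₁ t₂ t₃) from by rw [← hcyc t₁ t₂ t₃]] at e5
    have key : (ω t₁ t₂ (ω t₃ t₄ t₅) - ω t₁ t₃ (ω t₂ t₄ t₅) + ω t₁ t₄ (ω t₂ t₃ t₅) - ω t₁ t₅ (ω t₂ t₃ t₄)) = (ω t₁ t₂ (ω t₃ t₄ t₅) - ω t₄ t₅ (ω t₁ t₂ t₃) + ω t₃ t₅ (ω t₁ t₂ t₄) - ω t₃ t₄ (ω t₁ t₂ t₅)) - (ω t₁ t₃ (ω t₂ t₄ t₅) - (-ω t₄ t₅ (ω t₁ t₂ t₃)) + ω t₂ t₅ (ω t₁ t₃ t₄) - ω t₂ t₄ (ω t₁ t₃ t₅)) - (ω t₁ t₄ (ω t₂ t₃ t₅) - (-ω t₃ t₅ (ω t₁ t₂ t₄)) + (-ω t₂ t₅ (ω t₁ t₃ t₄)) - ω t₂ t₃ (ω t₁ t₄ t₅)) + (ω t₁ t₅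 (ω t₂ t₃ t₄) - (-ω t₃ t₄ (ω t₁ t₂ t₅)) + (-ω t₂ t₄ (ω t₁ t₃ t₅)) - (-ω t₂ t₃ (ω t₁ t₄ t₅))) - ((ω t₂ t₃ (ω t₁ t₄ t₅) - ω t₄ t₅ (ω t₁ t₂ t₃) + ω t₁ t₅ (ω t₂ t₃ t₄) - ω t₁ t₄ (ω t₂ t₃ t₅)) + (ω t₂ t₃ (ω t₁ t₄ t₅) - ω t₄ t₅ (ω t₁ t₂ t₃) + ω t₁ t₅ (ω t₂ t₃ t₄) - ω t₁ t₄ (ω t₂ t₃ t₅))) := by abel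
    rw [e1, e2, e3, e4, e5] at key
    simpa using key
  have hq : ∀ t₁ t₂ t₃ t₄ t₅ : V, -ω t₁ t₂ (ω t₃ t₄ t₅) + ω t₁ t₃ (ω t₂ t₄ t₅) - ω t₁ t₄ (ω t₂ t₃ t₅) - ω t₂ t₃ (ω t₁ t₄ t₅) + ω t₂ t₄ (ω t₁ t₃ t₅) - ω t₃ t₄ (ω t₁ t₂ t₅) = 0 := by
    intro t₁ t₂ t₃ t₄ t₅
    have e1 := hg t₁ t₂ t₃ t₄ t₅
    rw [show ω (ω t₁ t₂ t₃) t₄ t₅ = ω t₄ t₅ (ω t₁ t₂ t₃) from hcyc _ _ _] at e1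
    rw [show ω (ω t₁ t₂ t₄) t₃ t₅ = ω t₃ t₅ (ω t₁ t₂ t₄) from hcyc _ _ _] at e1
    rw [show ω (ω t₁ t₂ t₅) t₃ t₄ = ω t₃ t₄ (ω t₁ t₂ t₅) from hcyc _ _ _] at e1
    have e2 := hg t₁ t₃ t₂ t₄ t₅
    rw [show ω (ω t₁ t₃ t₂) t₄ t₅ = ω t₄ t₅ (ω t₁ t₃ t₂) from hcyc _ _ _] at e2
    rw [show ω (ω t₁ t₃ t₄) t₂ t₅ = ω t₂ t₅ (ω t₁ t₃ t₄) from hcyc _ _ _] at e2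
    rw [show ω (ω t₁ t₃ t₅) t₂ t₄ = ω t₂ t₄ (ω t₁ t₃ t₅) from hcyc _ _ _] at e2
    rw [show ω t₄ t₅ (ω t₁ t₃ t₂) = -ω t₄ t₅ (ω t₁ t₂ t₃) from by rw [sw23 t₁ t₃ t₂, hneg3]] at e2
    have e3 := hg t₁ t₄ t₂ t₃ t₅
    rw [show ω (ω t₁ t₄ t₂) t₃ t₅ = ω t₃ t₅ (ω t₁ t₄ t₂) from hcyc _ _ _] at e3
    rw [show ω (ω t₁ t₄ t₃) t₂ t₅ = ω t₂ t₅ (ω t₁ t₄ t₃) from hcyc _ _ _] at e3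
    rw [show ω (ω t₁ t₄ t₅) t₂ t₃ = ω t₂ t₃ (ω t₁ t₄ t₅) from hcyc _ _ _] at e3
    rw [show ω t₃ t₅ (ω t₁ t₄ t₂) = -ω t₃ t₅ (ω t₁ t₂ t₄) from by rw [sw23 t₁ t₄ t₂, hneg3]] at e3
    rw [show ω t₂ t₅ (ω t₁ t₄ t₃) = -ω t₂ t₅ (ω t₁ t₃ t₄) from by rw [sw23 t₁ t₄ t₃, hneg3]] at e3
    have e4 := hg t₁ t₅ t₂ t₃ t₄
    rw [show ω (ω t₁ t₅ t₂) t₃ t₄ = ω t₃ t₄ (ω t₁ t₅ t₂) from hcyc _ _ _] at e4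
    rw [show ω (ω t₁ t₅ t₃) t₂ t₄ = ω t₂ t₄ (ω t₁ t₅ t₃) from hcyc _ _ _] at e4
    rw [show ω (ω t₁ t₅ t₄) t₂ t₃ = ω t₂ t₃ (ω t₁ t₅ t₄) from hcyc _ _ _] at e4
    rw [show ω t₃ t₄ (ω t₁ t₅ t₂) = -ω t₃ t₄ (ω t₁ t₂ t₅) from by rw [sw23 t₁ t₅ t₂, hneg3]] at e4
    rw [show ω t₂ t₄ (ω t₁ t₅ t₃) = -ω t₂ t₄ (ω t₁ t₃ t₅) from by rw [sw23 t₁ t₅ t₃, hneg3]] at e4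
    rw [show ω t₂ t₃ (ω t₁ t₅ t₄) = -ω t₂ t₃ (ω t₁ t₄ t₅) from by rw [sw23 t₁ t₅ t₄, hneg3]] at e4
    have e5 := hg t₂ t₃ t₁ t₄ t₅
    rw [show ω (ω t₂ t₃ t₁) t₄ t₅ = ω t₄ t₅ (ω t₂ t₃ t₁) from hcyc _ _ _] at e5
    rw [show ω (ω t₂ t₃ t₄) t₁ t₅ = ω t₁ t₅ (ω t₂ t₃ t₄) from hcyc _ _ _] at e5
    rw [show ω (ω t₂ t₃ t₅) t₁ t₄ = ω t₁ t₄ (ω t₂ t₃ t₅) from hcyc _ _ _] at e5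
    rw [show ω t₄ t₅ (ω t₂ t₃ t₁) = ω t₄ t₅ (ω t₁ t₂ t₃) from by rw [← hcyc t₁ t₂ t₃]] at e5
    have key : (-ω t₁ t₂ (ω t₃ t₄ t₅) + ω t₁ t₃ (ω t₂ t₄ t₅) - ω t₁ t₄ (ω t₂ t₃ t₅) - ω t₂ t₃ (ω t₁ t₄ t₅) + ω t₂ t₄ (ω t₁ t₃ t₅) - ω t₃ t₄ (ω t₁ t₂ t₅)) = -(ω t₁ t₂ (ω t₃ t₄ t₅) - ω t₄ t₅ (ω t₁ t₂ t₃) + ω t₃ t₅ (ω t₁ t₂ t₄) - ω t₃ t₄ (ω t₁ t₂ t₅)) + (ω t₁ t₃ (ω t₂ t₄ t₅) - (-ω t₄ t₅ (ω t₁ t₂ t₃)) + ω t₂ t₅ (ω t₁ t₃ t₄) - ω t₂ t₄ (ω t₁ t₃ t₅)) + (ω t₁ t₄ (ω t₂ t₃ t₅) - (-ω t₃ t₅ (ω t₁ t₂ t₄)) + (-ω t₂ t₅ (ω t₁ t₃ t₄)) - ω t₂ t₃ (ω t₁ t₄ t₅)) - ((ω t₁ t₅ (ω t₂ t₃ t₄)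 - (-ω t₃ t₄ (ω t₁ t₂ t₅)) + (-ω t₂ t₄ (ω t₁ t₃ t₅)) - (-ω t₂ t₃ (ω t₁ t₄ t₅))) + (ω t₁ t₅ (ω t₂ t₃ t₄) - (-ω t₃ t₄ (ω t₁ t₂ t₅)) + (-ω t₂ t₄ (ω t₁ t₃ t₅)) - (-ω t₂ t₃ (ω t₁ t₄ t₅)))) + ((ω t₂ t₃ (ω t₁ t₄ t₅) - ω t₄ t₅ (ω t₁ t₂ t₃) + ω t₁ t₅ (ω t₂ t₃ t₄) - ω t₁ t₄ (ω t₂ t₃ t₅)) + (ω t₂ t₃ (ω t₁ t₄ t₅) - ω t₄ t₅ (ω t₁ t₂ t₃) + ω t₁ t₅ (ω t₂ t₃ t₄) - ω t₁ t₄ (ω t₂ t₃ t₅))) := by abel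
    rw [e1, e2, e3, e4, e5] at key
    simpa using key
  exact ⟨hh, hq⟩
end

section
/- Let K be a field of characteristic different from 2 and 3, let U = K[x_1,x_2,x_3] and ω = Jac_3^S, so ω(u_1,u_2,u_3) = det(∂_i u_j). Index by the 10 pairs {i_1 < i_2} ⊂ {1,...,5}, and for λ = (λ_{i_1 i_2}) ∈ K^{10} define the 5-linear expression f_λ(u_1,...,u_5) = Σ_{i_1<i_2} λ_{i_1 i_2} ω(u_{i_1}, u_{i_2}, ω(u_{i_3},u_{i_4},u_{i_5})), where {i_3<i_4<i_5} = {1,...,5}∖{i_1,i_2}. If f_λ(u_1,...,u_5) = 0 for all u_1,...,u_5 ∈ U, then λ lies in the K-span of the five coefficient vectors of the polynomials f_{45}, f_{35}, f_{34}, f_{25}, f_{15}, each of which is a consequence of the 3-Lie identity and skew-symmetry of ω. -/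
open MvPolynomial

/-- The Jacobian `Jac_3^S(a,b,c) = det(∂_i u_j)` on `K[x_1,x_2,x_3]`. -/
noncomputable def jac3 {K : Type*} [Field K] (a b c : MvPolynomial (Fin 3) K) :
    MvPolynomial (Fin 3) K :=
  Matrix.det (Matrix.of fun i j => pderiv i (![a, b, c] j))

set_option maxHeartbeats 3200000 in
/-- Any `Ω`-degree-2 polynomial identity `f_λ = Σ_{i<j} λ_{ij} ω(u_i,u_j,ω(u_k,u_l,u_m))` of
the Jacobian algebra `(K[x_1,x_2,x_3], Jac_3^S)` (char K ≠ 2,3) has coefficient vector `λ`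
in the `K`-span of the coefficient vectors of `f_{45}, f_{35}, f_{34}, f_{25}, f_{15}`. -/
theorem jac3_degree_two_identities {K : Type*} [Field K]
    (hchar2 : ringChar K ≠ 2) (hchar3 : ringChar K ≠ 3)
    (l12 l13 l14 l15 l23 l24 l25 l34 l35 l45 : K)
    (hid : ∀ u₁ u₂ u₃ u₄ u₅ : MvPolynomial (Fin 3) K,
      l12 • jac3 u₁ u₂ (jac3 u₃ u₄ u₅) + l13 • jac3 u₁ u₃ (jac3 u₂ u₄ u₅) +
      l14 • jac3 u₁ u₄ (jac3 u₂ u₃ u₅) + l15 • jac3 u₁ u₅ (jac3 u₂ u₃ u₄) +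
      l23 • jac3 u₂ u₃ (jac3 u₁ u₄ u₅) + l24 • jac3 u₂ u₄ (jac3 u₁ u₃ u₅) +
      l25 • jac3 u₂ u₅ (jac3 u₁ u₃ u₄) + l34 • jac3 u₃ u₄ (jac3 u₁ u₂ u₅) +
      l35 • jac3 u₃ u₅ (jac3 u₁ u₂ u₄) + l45 • jac3 u₄ u₅ (jac3 u₁ u₂ u₃) = 0) :
    -- λ is a K-linear combination of the coefficient vectors of f₄₅, f₃₅, f₃₄, f₂₅, f₁₅:
    -- f₄₅ = −ω₁₂ω₃₄₅ + ω₁₃ω₂₄₅ − ω₂₃ω₁₄₅ + ω₄₅ω₁₂₃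
    -- f₃₅ =  ω₁₂ω₃₄₅ + ω₁₄ω₂₃₅ − ω₂₄ω₁₃₅ + ω₃₅ω₁₂₄
    -- f₃₄ =  ω₁₂ω₃₄₅ − ω₁₃ω₂₄₅ + ω₁₄ω₂₃₅ + ω₂₃ω₁₄₅ − ω₂₄ω₁₃₅ + ω₃₄ω₁₂₅
    -- f₂₅ =  ω₁₂ω₃₄₅ + ω₂₃ω₁₄₅ − ω₂₄ω₁₃₅ + ω₂₅ω₁₃₄
    -- f₁₅ = −ω₁₂ω₃₄₅ + ω₁₃ω₂₄₅ − ω₁₄ω₂₃₅ + ω₁₅ω₂₃₄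
    ∃ c45 c35 c34 c25 c15 : K,
      l12 = -c45 + c35 + c34 + c25 - c15 ∧
      l13 = c45 - c34 + c15 ∧
      l14 = c35 + c34 - c15 ∧
      l15 = c15 ∧
      l23 = -c45 + c34 + c25 ∧
      l24 = -c35 - c34 - c25 ∧
      l25 = c25 ∧
      l34 = c34 ∧
      l35 = c35 ∧
      l45 = c45 := by
  have h2 : (2:K) ≠ 0 := Ring.two_ne_zero hchar2
  have h16 : (16:K) ≠ 0 := by
    have : (16:K) = 2^4 := by norm_num
    rw [this]; exact pow_ne_zero 4 h2
  have hA := congrArg (MvPolynomial.eval (fun _ : Fin 3 => (1:K)))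
    (hid (X 0 * X 1) (X 0 * X 2) (X 1) (X 0 * X 1 * X 2) (X 1))
  have hB := congrArg (MvPolynomial.eval (fun _ : Fin 3 => (1:K)))
    (hid (X 0 * X 0) (X 1 * X 2) (X 1 * X 2) (X 0 * X 0 * X 1) (X 0 * X 0 * X 1))
  have hC := congrArg (MvPolynomial.eval (fun _ : Fin 3 => (1:K)))
    (hid (X 2 * X 2) (X 0 * X 1 * X 1) (X 0 * X 0) (X 2) (X 0 * X 0))
  have hE := congrArg (MvPolynomial.eval (fun _ : Fin 3 => (1:K)))
    (hid (X 0) (X 0) (X 1 * X 2 * X 2) (X 0 * X 0 * X 2) (X 1))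
  have hF := congrArg (MvPolynomial.eval (fun _ : Fin 3 => (1:K)))
    (hid (X 0 * X 1) (X 0 * X 1 * X 2) (X 1) (X 0 * X 1) (X 2 * X 2))
  simp only [jac3, Matrix.det_fin_three, pderiv_mul, smul_eval] at hA hB hC hE hF
  simp at hA
  simp at hB
  simp at hC
  simp at hE
  simp at hF
  have hB' : l24 + l25 + l34 + l35 = 0 :=
    mul_left_cancel₀ h2 (by linear_combination hB)
  have hC' : l13 - l15 + l34 - l45 = 0 :=
    mul_left_cancel₀ h16 (by linear_combination hC)
  have hE' : l14 + l15 + l24 + l25 = 0 :=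
    mul_left_cancel₀ h2 (by linear_combination hE)
  have hF' : l12 + l15 + l24 + l45 = 0 :=
    mul_left_cancel₀ h2 (by linear_combination hF)
  refine ⟨l45, l35, l34, l25, l15, ?_, ?_, ?_, rfl, ?_, ?_, rfl, rfl, rfl, rfl⟩
  · linear_combination hF' - hB'
  · linear_combination hC'
  · linear_combination hE' - hB'
  · linear_combination hA
  · linear_combination hB'
end

section
/- Let K be a field of characteristic 0, U = K[x_1,...,x_n] the polynomial algebra with partial derivatives ∂_1,...,∂_n, and let pr : U → K be the constant-term projection. Let ψ : U^k → U be a k-linear map that is D-invariant, i.e. for every i = 1,...,n and all u_1,...,u_k ∈ U, ∂_i(ψ(u_1,...,u_k)) = Σ_{l=1}^k ψ(u_1,...,∂_i(u_l),...,u_k). Then ψ(u_1,...,u_k) = Σ_{α(1),...,α(k) ∈ ℕ^n} (∂^{α(1)}(u_1)/α(1)!) ··· (∂^{α(k)}(u_k)/α(k)!) · pr(ψ(x^{α(1)},...,x^{α(k)})), where the sum has only finitely many nonzero terms. -/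
/-!
Both sides of the expansion are `D`-invariant multilinear maps: the right-hand side because each
`∂_i` commutes with every `∂^α` and acts on a product by the Leibniz rule. Their constant terms agree
on tuples of monomials, since `pr (∂^β x^α / β!) = δ_{αβ}`, hence everywhere by multilinearity.
Finally, a `D`-invariant map `δ` with `pr ∘ δ = 0` vanishes: the span of its values is stable under
every `∂_i`, so `pr (∂^γ δ(u) / γ!) = 0` for all `γ`, and these numbers are the coefficients of `δ(u)`.
-/

open Finset MvPolynomial

/-- The iterated partial derivative `∂^α = ∂_1^{α_1} ∘ ⋯ ∘ ∂_n^{α_n}` on `K[x_1,…,x_n]`. -/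
noncomputable def derivPow {K : Type*} [Field K] {n : ℕ} (α : Fin n → ℕ) :
    MvPolynomial (Fin n) K →ₗ[K] MvPolynomial (Fin n) K :=
  (List.ofFn fun i : Fin n =>
    ((pderiv i).toLinearMap : MvPolynomial (Fin n) K →ₗ[K] MvPolynomial (Fin n) K) ^ (α i)).prod

/-- The term `(∂^{α(1)}(u_1)/α(1)!) ⋯ (∂^{α(k)}(u_k)/α(k)!) · pr ψ(x^{α(1)},…,x^{α(k)})`
of the Taylor-type expansion of a `D`-invariant `k`-linear map `ψ`. -/
noncomputable def taylorTerm {K : Type*} [Field K] {n k : ℕ}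
    (ψ : (Fin k → MvPolynomial (Fin n) K) → MvPolynomial (Fin n) K)
    (α : Fin k → Fin n → ℕ) (u : Fin k → MvPolynomial (Fin n) K) :
    MvPolynomial (Fin n) K :=
  constantCoeff (ψ fun j => ∏ i : Fin n, X i ^ α j i) •
    ∏ j : Fin k, (((∏ i : Fin n, Nat.factorial (α j i) : ℕ) : K)⁻¹ • derivPow (α j) (u j))

theorem Derivation.map_finset_prod {R A ι : Type*} [CommSemiring R] [CommSemiring A] [Algebra R A]
    [DecidableEq ι] (D : Derivation R A A) (s : Finset ι) (f : ι → A) :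
    D (∏ j ∈ s, f j) = ∑ l ∈ s, D (f l) * ∏ j ∈ s.erase l, f j := by
  induction s using Finset.induction_on with
  | empty => simp
  | insert a s ha ih =>
    rw [prod_insert ha, D.leibniz, ih, sum_insert ha, erase_insert ha, smul_eq_mul, smul_eq_mul,
      mul_sum]
    have hsum : ∀ l ∈ s, f a * (D (f l) * ∏ j ∈ s.erase l, f j) =
        D (f l) * ∏ j ∈ (insert a s).erase l, f j := fun l hl => by
      rw [erase_insert_of_ne (ne_of_mem_of_not_mem hl ha).symm,
        prod_insert fun h => ha (mem_of_mem_erase h)]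
      ring
    rw [sum_congr rfl hsum]
    ring

theorem Derivation.map_prod_eq_sum_update {R A ι : Type*} [CommSemiring R] [CommSemiring A]
    [Algebra R A] [Fintype ι] [DecidableEq ι] (D : Derivation R A A) (f : ι → A) :
    D (∏ j, f j) = ∑ l, ∏ j, Function.update f l (D (f l)) j := by
  simp only [D.map_finset_prod, prod_update_of_mem (mem_univ _), sdiff_singleton_eq_erase]

def MultilinearMap.ofUpdateSMulAdd {R ι M N : Type*} [Semiring R] [decι : DecidableEq ι]
    [AddCommMonoid M] [Module R M] [AddCommGroup N] [Module R N] (f : (ι → M) → N)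
    (hf : ∀ (v : ι → M) (i : ι) (c : R) (x y : M),
      f (Function.update v i (c • x + y)) = c • f (Function.update v i x) + f (Function.update v i y)) :
    MultilinearMap R (fun _ : ι => M) N where
  toFun := f
  map_update_add' := by
    intro dec m i x y
    obtain rfl := Subsingleton.elim dec decι
    simpa using hf m i 1 x y
  map_update_smul' := by
    intro dec m i c x
    obtain rfl := Subsingleton.elim dec decι
    have h0 : f (Function.update m i 0) = 0 := by
      simpa using hf m i 1 0 0
    simpa [h0] using hf m i c x 0

namespace MvPolynomial

variable {R σ : Type*}

theorem pderiv_comm [CommRing R] (i j : σ) (p : MvPolynomial σ R) :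
    pderiv i (pderiv j p) = pderiv j (pderiv i p) := by
  classical
  have h : ⁅pderiv i, pderiv j⁆ = (0 : Derivation R (MvPolynomial σ R) (MvPolynomial σ R)) :=
    derivation_ext fun k => by
      rw [Derivation.commutator_apply]
      simp [pderiv_X, Pi.single_apply, apply_ite]
  have := congr($h p)
  rwa [Derivation.commutator_apply, Derivation.zero_apply, sub_eq_zero] at this

theorem coeff_pderiv_pow [CommSemiring R] [DecidableEq σ] (i : σ) (m : ℕ) (p : MvPolynomial σ R)
    (d : σ →₀ ℕ) :
    coeff d (((pderiv i).toLinearMap ^ m) p) =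
      coeff (d + Finsupp.single i m) p * (d i + m).descFactorial m := by
  induction m generalizing d p with
  | zero => simp
  | succ m ih =>
    rw [pow_succ, Module.End.mul_apply, ih, Derivation.coeFn_coe, coeff_pderiv, add_assoc,
      ← Finsupp.single_add, ← add_assoc (d i), Nat.succ_descFactorial_succ]
    simp only [Finsupp.add_apply, Finsupp.single_eq_same]
    push_cast
    ring

theorem coeff_list_prod_pderiv_pow [CommSemiring R] [DecidableEq σ] (α : σ → ℕ) {l : List σ}
    (hl : l.Nodup) (p : MvPolynomial σ R) (d : σ →₀ ℕ) :
    coeff d ((l.map fun i => (pderiv i).toLinearMap ^ α i).prod p) =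
      coeff (d + ∑ i ∈ l.toFinset, Finsupp.single i (α i)) p *
        ∏ i ∈ l.toFinset, (d i + α i).descFactorial (α i) := by
  induction l generalizing d with
  | nil => simp
  | cons a l ih =>
    obtain ⟨ha, hl⟩ := List.nodup_cons.mp hl
    have ha' : a ∉ l.toFinset := List.mem_toFinset.not.mpr ha
    have hshift : ∀ i ∈ l.toFinset, (d + Finsupp.single a (α a)) i = d i := fun i hi => by
      rw [Finsupp.add_apply, Finsupp.single_eq_of_ne (ne_of_mem_of_not_mem hi ha'), add_zero]
    rw [List.map_cons, List.prod_cons, Module.End.mul_apply, coeff_pderiv_pow, ih hl,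
      prod_congr rfl fun i hi => by rw [hshift i hi], List.toFinset_cons, sum_insert ha',
      prod_insert ha', add_assoc]
    push_cast
    ring

theorem prod_univ_X_pow_eq_monomial [CommSemiring R] [Fintype σ] (d : σ →₀ ℕ) :
    ∏ i, X i ^ d i = monomial d (1 : R) := by
  rw [← Finsupp.prod_pow, ← prod_X_pow_eq_monomial]
  rfl

end MvPolynomial

def IsDInvariant {R σ ι : Type*} [CommSemiring R] [Fintype ι] [DecidableEq ι]
    (ψ : (ι → MvPolynomial σ R) → MvPolynomial σ R) : Prop :=
  ∀ (i : σ) (u : ι → MvPolynomial σ R),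
    pderiv i (ψ u) = ∑ l, ψ (Function.update u l (pderiv i (u l)))

theorem IsDInvariant.sub {R σ ι : Type*} [CommRing R] [Fintype ι] [DecidableEq ι]
    {φ ψ : (ι → MvPolynomial σ R) → MvPolynomial σ R} (hφ : IsDInvariant φ)
    (hψ : IsDInvariant ψ) : IsDInvariant (φ - ψ) := fun i u => by
  simp only [Pi.sub_apply, map_sub, hφ i u, hψ i u, sum_sub_distrib]

section DerivPow

variable {K : Type*} [Field K] {n : ℕ}

local notation "U" => MvPolynomial (Fin n) K

theorem coeff_derivPow (α : Fin n → ℕ) (p : U) (d : Fin n →₀ ℕ) :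
    coeff d (derivPow α p) =
      coeff (d + Finsupp.equivFunOnFinite.symm α) p * ∏ i, (d i + α i).descFactorial (α i) := by
  rw [derivPow, List.ofFn_eq_map, coeff_list_prod_pderiv_pow α (List.nodup_finRange n),
    List.toFinset_finRange, Finsupp.equivFunOnFinite_symm_eq_sum]

theorem pderiv_derivPow (i : Fin n) (α : Fin n → ℕ) (p : U) :
    pderiv i (derivPow α p) = derivPow α (pderiv i p) := by
  have hcomm : Commute ((pderiv i).toLinearMap : U →ₗ[K] U) (derivPow α) :=
    Commute.list_prod_right _ _ fun _ hf => by
      obtain ⟨j, rfl⟩ := List.mem_ofFn.mp hf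
      exact Commute.pow_right (LinearMap.ext fun p => pderiv_comm i j p) _
  exact congr($hcomm p)

theorem derivPow_support_finite (p : U) :
    (Function.support fun α : Fin n → ℕ => derivPow α p).Finite := by
  refine (p.support.finite_toSet.biUnion fun e _ => Set.finite_Iic (⇑e : Fin n → ℕ)).subset
    fun α hα => ?_
  obtain ⟨d, hd⟩ := ne_zero_iff.mp (show derivPow α p ≠ 0 from hα)
  rw [coeff_derivPow] at hd
  exact Set.mem_biUnion (mem_support_iff.mpr (left_ne_zero_of_mul hd))
    fun i => Nat.le_add_left (α i) (d i)

theorem mem_invtSubmodule_derivPow {T : Submodule K U}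
    (hT : ∀ i, T ∈ Module.End.invtSubmodule (pderiv i).toLinearMap) (α : Fin n → ℕ) :
    T ∈ Module.End.invtSubmodule (derivPow α) := by
  let S : Submonoid (Module.End K U) :=
    { carrier := {f | T ∈ f.invtSubmodule}
      mul_mem' := fun hf hg => Module.End.invtSubmodule.comp _ hf hg
      one_mem' := by simp }
  exact S.list_prod_mem fun f hf => by
    obtain ⟨i, rfl⟩ := List.mem_ofFn.mp hf
    exact pow_mem (show _ ∈ S from hT i) _

noncomputable def dividedDeriv (α : Fin n → ℕ) : U →ₗ[K] U :=
  ((∏ i, (α i).factorial : ℕ) : K)⁻¹ • derivPow α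

theorem pderiv_dividedDeriv (i : Fin n) (α : Fin n → ℕ) (p : U) :
    pderiv i (dividedDeriv α p) = dividedDeriv α (pderiv i p) := by
  simp only [dividedDeriv, LinearMap.smul_apply, Derivation.map_smul, pderiv_derivPow]

variable [CharZero K]

theorem constantCoeff_dividedDeriv (α : Fin n → ℕ) (p : U) :
    constantCoeff (dividedDeriv α p) = coeff (Finsupp.equivFunOnFinite.symm α) p := by
  have hfac : ((∏ i, (α i).factorial : ℕ) : K) ≠ 0 :=
    Nat.cast_ne_zero.mpr (prod_ne_zero_iff.mpr fun i _ => (α i).factorial_ne_zero)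
  rw [dividedDeriv, LinearMap.smul_apply, constantCoeff_smul, constantCoeff_eq, coeff_derivPow]
  simp only [Finsupp.coe_zero, Pi.zero_apply, zero_add, Nat.descFactorial_self, smul_eq_mul]
  field_simp

theorem eq_bot_of_mem_invtSubmodule_pderiv {T : Submodule K U}
    (hT : ∀ i, T ∈ Module.End.invtSubmodule (pderiv i).toLinearMap)
    (h0 : ∀ p ∈ T, constantCoeff p = 0) : T = ⊥ := by
  refine (Submodule.eq_bot_iff T).mpr fun p hp => MvPolynomial.ext _ _ fun d => ?_
  rw [coeff_zero, ← Finsupp.equivFunOnFinite_symm_coe d, ← constantCoeff_dividedDeriv]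
  exact h0 _ (T.smul_mem _ (mem_invtSubmodule_derivPow hT _ hp))

variable {ι : Type*} [Fintype ι] [DecidableEq ι]

theorem IsDInvariant.eq_zero_of_constantCoeff_eq_zero {δ : (ι → U) → U} (hδ : IsDInvariant δ)
    (h0 : ∀ u, constantCoeff (δ u) = 0) (u : ι → U) : δ u = 0 := by
  have hT : ∀ i, Submodule.span K (Set.range δ) ∈
      Module.End.invtSubmodule (pderiv i).toLinearMap := fun i => by
    refine (Module.End.mem_invtSubmodule_iff_map_le _).mpr <| (Submodule.map_span_le _ _ _).mpr ?_
    rintro _ ⟨v, rfl⟩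
    rw [Derivation.coeFn_coe, hδ i v]
    exact Submodule.sum_mem _ fun l _ => Submodule.subset_span ⟨_, rfl⟩
  have hker : Submodule.span K (Set.range δ) ≤ LinearMap.ker (lcoeff K 0) :=
    Submodule.span_le.mpr <| Set.range_subset_iff.mpr fun v => by
      simpa [constantCoeff_eq] using h0 v
  have hbot := eq_bot_of_mem_invtSubmodule_pderiv hT fun p hp => by
    simpa [constantCoeff_eq] using hker hp
  exact (Submodule.eq_bot_iff _).mp hbot _ (Submodule.subset_span ⟨u, rfl⟩)

theorem MultilinearMap.eq_of_isDInvariant {f g : MultilinearMap K (fun _ : ι => U) U}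
    (hf : IsDInvariant f) (hg : IsDInvariant g)
    (h : ∀ d : ι → Fin n →₀ ℕ,
      constantCoeff (f fun j => monomial (d j) 1) = constantCoeff (g fun j => monomial (d j) 1)) :
    f = g := by
  have hpr : (lcoeff K 0).compMultilinearMap f = (lcoeff K 0).compMultilinearMap g :=
    Module.Basis.ext_multilinear (fun _ => basisMonomials (Fin n) K) fun d => by
      simpa [constantCoeff_eq] using h d
  refine MultilinearMap.ext fun u => sub_eq_zero.mp ?_
  refine (hf.sub hg).eq_zero_of_constantCoeff_eq_zero (fun v => ?_) u
  simpa [constantCoeff_eq, sub_eq_zero] using congr($hpr v)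

end DerivPow

section Taylor

variable {K : Type*} [Field K] {n k : ℕ}

local notation "U" => MvPolynomial (Fin n) K

theorem taylorTerm_eq (ψ : (Fin k → U) → U) (α : Fin k → Fin n → ℕ) (u : Fin k → U) :
    taylorTerm ψ α u =
      constantCoeff (ψ fun j => ∏ i, X i ^ α j i) • ∏ j, dividedDeriv (α j) (u j) :=
  rfl

noncomputable def taylorTermMultilinear (ψ : (Fin k → U) → U) (α : Fin k → Fin n → ℕ) :
    MultilinearMap K (fun _ : Fin k => U) U :=
  constantCoeff (ψ fun j => ∏ i, X i ^ α j i) •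
    (MultilinearMap.mkPiAlgebra K (Fin k) U).compLinearMap fun j => dividedDeriv (α j)

theorem coe_taylorTermMultilinear (ψ : (Fin k → U) → U) (α : Fin k → Fin n → ℕ) :
    ⇑(taylorTermMultilinear ψ α) = taylorTerm ψ α :=
  rfl

theorem isDInvariant_taylorTerm (ψ : (Fin k → U) → U) (α : Fin k → Fin n → ℕ) :
    IsDInvariant (taylorTerm ψ α) := fun i u => by
  rw [taylorTerm_eq, Derivation.map_smul, Derivation.map_prod_eq_sum_update, smul_sum]
  refine sum_congr rfl fun l _ => ?_
  rw [taylorTerm_eq, pderiv_dividedDeriv]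
  refine congrArg _ (prod_congr rfl fun j _ => ?_)
  exact (Function.apply_update (fun j => ⇑(dividedDeriv (α j))) u l _ j).symm

theorem taylorTerm_support_finite (ψ : (Fin k → U) → U) (u : Fin k → U) :
    (Function.support fun α : Fin k → Fin n → ℕ => taylorTerm ψ α u).Finite := by
  refine (Set.Finite.pi' fun j => derivPow_support_finite (u j)).subset fun α hα j hj => hα ?_
  dsimp only at hj ⊢
  rw [taylorTerm_eq, prod_eq_zero (mem_univ j) (by simp [dividedDeriv, hj]), smul_zero]

noncomputable def taylorExpansion (ψ : (Fin k → U) → U) :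
    MultilinearMap K (fun _ : Fin k => U) U where
  toFun u := ∑ᶠ α, taylorTerm ψ α u
  map_update_add' m i x y := by
    simp only [← coe_taylorTermMultilinear, MultilinearMap.map_update_add]
    exact finsum_add_distrib (taylorTerm_support_finite ψ _) (taylorTerm_support_finite ψ _)
  map_update_smul' m i c x := by
    simp only [← coe_taylorTermMultilinear, MultilinearMap.map_update_smul]
    exact (smul_finsum' c (taylorTerm_support_finite ψ _)).symm

theorem taylorExpansion_apply (ψ : (Fin k → U) → U) (u : Fin k → U) :
    taylorExpansion ψ u = ∑ᶠ α, taylorTerm ψ α u :=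
  rfl

theorem isDInvariant_taylorExpansion (ψ : (Fin k → U) → U) :
    IsDInvariant (taylorExpansion ψ) := fun i u => by
  simp only [taylorExpansion_apply]
  rw [map_finsum (pderiv i) (taylorTerm_support_finite ψ u),
    ← finsum_sum_comm _ _ fun l _ => taylorTerm_support_finite ψ _]
  exact finsum_congr fun α => isDInvariant_taylorTerm ψ α i u

variable [CharZero K]

theorem constantCoeff_taylorTerm_monomial (ψ : (Fin k → U) → U) (α : Fin k → Fin n → ℕ)
    (d : Fin k → Fin n →₀ ℕ) :
    constantCoeff (taylorTerm ψ α fun j => monomial (d j) 1) =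
      if α = (fun j => ⇑(d j)) then constantCoeff (ψ fun j => monomial (d j) 1) else 0 := by
  simp only [taylorTerm_eq, constantCoeff_smul, map_prod, constantCoeff_dividedDeriv,
    coeff_monomial, smul_eq_mul]
  split_ifs with h
  · subst h
    simp [prod_univ_X_pow_eq_monomial]
  · obtain ⟨j, hj⟩ := Function.ne_iff.mp h
    rw [prod_eq_zero (mem_univ j) (if_neg fun h => hj (by rw [h]; rfl)), mul_zero]

theorem constantCoeff_taylorExpansion_monomial (ψ : (Fin k → U) → U) (d : Fin k → Fin n →₀ ℕ) :
    constantCoeff (taylorExpansion ψ fun j => monomial (d j) 1) =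
      constantCoeff (ψ fun j => monomial (d j) 1) := by
  rw [taylorExpansion_apply, map_finsum _ (taylorTerm_support_finite ψ _),
    finsum_eq_single _ (fun j => ⇑(d j)) fun α hα => by
      rw [constantCoeff_taylorTerm_monomial, if_neg hα],
    constantCoeff_taylorTerm_monomial, if_pos rfl]

end Taylor

/-- Any `D`-invariant `k`-linear map `ψ` on `K[x_1,…,x_n]` (char `K = 0`) is determined by
the constant terms of its values on monomials:
`ψ(u_1,…,u_k) = Σ_α (∂^{α(1)}u_1/α(1)!)⋯(∂^{α(k)}u_k/α(k)!)·pr ψ(x^{α(1)},…,x^{α(k)})`,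
a sum with finitely many nonzero terms. -/
theorem dInvariant_taylor_expansion {K : Type*} [Field K] [CharZero K] {n k : ℕ}
    (ψ : (Fin k → MvPolynomial (Fin n) K) → MvPolynomial (Fin n) K)
    (hml : ∀ (v : Fin k → MvPolynomial (Fin n) K) (i : Fin k) (c : K)
      (x y : MvPolynomial (Fin n) K),
      ψ (Function.update v i (c • x + y)) =
        c • ψ (Function.update v i x) + ψ (Function.update v i y))
    (hinv : ∀ (i : Fin n) (u : Fin k → MvPolynomial (Fin n) K),
      pderiv i (ψ u) = ∑ l : Fin k, ψ (Function.update u l (pderiv i (u l)))) :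
    ∀ u : Fin k → MvPolynomial (Fin n) K,
      (Function.support fun α : Fin k → Fin n → ℕ => taylorTerm ψ α u).Finite ∧
      ψ u = ∑ᶠ α : Fin k → Fin n → ℕ, taylorTerm ψ α u := by
  intro u
  refine ⟨taylorTerm_support_finite ψ u, ?_⟩
  have h := MultilinearMap.eq_of_isDInvariant (f := .ofUpdateSMulAdd ψ hml)
    (g := taylorExpansion ψ) hinv (isDInvariant_taylorExpansion ψ)
    fun d => (constantCoeff_taylorExpansion_monomial ψ d).symm
  exact congr($h u)
end

section
/- Let K be a field of characteristic 0, n ≥ 1, and K_n = K[x_1^{±1},...,x_n^{±1}] the Laurent polynomial algebra with partial derivatives ∂_i and θ = (1,...,1) ∈ ℤ^n. Then: (1) the monomial x^{−θ} does not belong to the K-linear span of {Jac_n^S(u_1,...,u_n) : u_1,...,u_n ∈ K_n}; (2) for every β ∈ ℤ^n with β ≠ −θ, the monomial x^β lies in this span; in fact, if β_i ≠ −1 then x^β = Jac_n^S(x_1,...,x_{i−1}, (β_i+1)^{−1} x^{β+ε_i}, x_{i+1},...,x_n). -/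
open Finset

/-- The Laurent polynomial algebra `K[x_1^{±1},…,x_n^{±1}]`, realized as the group algebra
of `ℤ^n` over `K`. -/
abbrev Laurent (K : Type*) [Field K] (n : ℕ) : Type _ := AddMonoidAlgebra K (Fin n → ℤ)

/-- The monomial `x^α`. -/
noncomputable def lmon {K : Type*} [Field K] {n : ℕ} (α : Fin n → ℤ) : Laurent K n :=
  AddMonoidAlgebra.single α 1

/-- The partial derivative `∂_i`, with `∂_i(x^α) = α_i x^{α − ε_i}`. -/
noncomputable def lpd {K : Type*} [Field K] {n : ℕ} (i : Fin n) (u : Laurent K n) :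
    Laurent K n :=
  Finsupp.sum u.coeff fun α c => AddMonoidAlgebra.single (α - Pi.single i 1) ((α i : K) * c)

/-- The Jacobian `Jac_n^S(u_1,…,u_n) = det(∂_i u_j)` on Laurent polynomials. -/
noncomputable def ljac {K : Type*} [Field K] {n : ℕ} (u : Fin n → Laurent K n) : Laurent K n :=
  Matrix.det (Matrix.of fun i j => lpd i (u j))

/-!
Each `∂_i` is `K`-linear, so `u ↦ Jac(u)` is `K`-multilinear and the coefficient of `x^{-θ}` in
`Jac(u)` is determined by its values on monomials. For monomials,
`Jac(x^{v_1}, …, x^{v_n}) = det(v_j i) · x^{Σ v_j - θ}`; the exponent is `-θ` only when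
`Σ v_j = 0`, and then the integer matrix `(v_j i)` has zero row sums, hence zero determinant.
Conversely, the Jacobian matrix of `(x_1, …, (β_i+1)⁻¹ x^{β+ε_i}, …, x_n)` is the identity
with its `i`-th column replaced, so its determinant is `∂_i((β_i+1)⁻¹ x^{β+ε_i}) = x^β`.
-/

namespace Matrix

variable {ι R : Type*} [Fintype ι] [DecidableEq ι] [CommRing R]

theorem det_one_updateCol (i : ι) (b : ι → R) :
    ((1 : Matrix ι ι R).updateCol i b).det = b i := by
  rw [← cramer_apply, cramer_one, Module.End.one_apply]

theorem det_eq_zero_of_sum_row_eq_zero [Nonempty ι] {A : Matrix ι ι R}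
    (h : ∀ i, ∑ j, A i j = 0) : A.det = 0 := by
  obtain ⟨j⟩ := ‹Nonempty ι›
  have hcol := det_updateCol_sum A j fun _ => 1
  simp only [one_smul, h] at hcol
  exact hcol ▸ det_eq_zero_of_column_eq_zero j fun _ => updateCol_self

end Matrix

section Laurent

open AddMonoidAlgebra

variable {K : Type*} [Field K] {n : ℕ}

theorem lpd_single (i : Fin n) (α : Fin n → ℤ) (c : K) :
    lpd i (single α c) = single (α - Pi.single i 1) ((α i : K) * c) := by
  rw [lpd, coeff_single, Finsupp.sum_single_index]
  simp

theorem lpd_lmon (i : Fin n) (α : Fin n → ℤ) :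
    lpd i (lmon (K := K) α) = single (α - Pi.single i 1) (α i : K) := by
  rw [lmon, lpd_single, mul_one]

theorem lpd_lmon_single_one (i j : Fin n) :
    lpd i (lmon (K := K) (Pi.single j 1)) = (1 : Matrix (Fin n) (Fin n) (Laurent K n)) i j := by
  rw [lpd_lmon]
  obtain rfl | hij := eq_or_ne i j
  · simp [one_def]
  · simp [Pi.single_eq_of_ne hij, Matrix.one_apply_ne hij]

variable (K) in
noncomputable def lpdLinear (i : Fin n) : Laurent K n →ₗ[K] Laurent K n :=
  Finsupp.lsum K (fun α => (α i : K) • lsingle (α - Pi.single i 1)) ∘ₗ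
    (coeffLinearEquiv K).toLinearMap

theorem lpdLinear_apply (i : Fin n) (u : Laurent K n) : lpdLinear K i u = lpd i u := by
  rw [lpdLinear, LinearMap.comp_apply, LinearEquiv.coe_coe, coeffLinearEquiv_apply,
    Finsupp.lsum_apply]
  refine Finsupp.sum_congr fun α _ => ?_
  exact smul_single' _ _ _

theorem lpd_smul (i : Fin n) (c : K) (u : Laurent K n) : lpd i (c • u) = c • lpd i u := by
  rw [← lpdLinear_apply, ← lpdLinear_apply, map_smul]

variable (K n) in
noncomputable def ljacMultilinear : MultilinearMap K (fun _ : Fin n => Laurent K n) (Laurent K n) :=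
  ((Matrix.detRowAlternating : (Fin n → Laurent K n) [⋀^Fin n]→ₗ[Laurent K n] Laurent K n)
    |>.toMultilinearMap.restrictScalars K).compLinearMap fun _ => LinearMap.pi (lpdLinear K)

theorem ljacMultilinear_apply (u : Fin n → Laurent K n) : ljacMultilinear K n u = ljac u := by
  change Matrix.det (fun j k => lpdLinear K k (u j)) = _
  simp_rw [lpdLinear_apply]
  rw [ljac, ← Matrix.det_transpose]
  rfl

theorem lmon_eq_ljac_update [CharZero K] (β : Fin n → ℤ) (i : Fin n) (h : β i ≠ -1) :
    lmon (K := K) β = ljac (Function.update (fun j : Fin n => lmon (Pi.single j 1)) i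
      ((((β i + 1 : ℤ) : K))⁻¹ • lmon (β + Pi.single i 1))) := by
  set c : K := ((β i + 1 : ℤ) : K)
  have hc : c ≠ 0 := Int.cast_ne_zero.mpr (by omega)
  set u := Function.update (fun j : Fin n => lmon (K := K) (Pi.single j 1)) i
    (c⁻¹ • lmon (β + Pi.single i 1))
  have hmat : Matrix.of (fun k j => lpd k (u j)) =
      (1 : Matrix (Fin n) (Fin n) (Laurent K n)).updateCol i fun k => lpd k (u i) := by
    ext k j
    obtain rfl | hj := eq_or_ne j i
    · simp
    · simp [u, Matrix.updateCol_ne hj, Function.update_of_ne hj, lpd_lmon_single_one]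
  rw [ljac, hmat, Matrix.det_one_updateCol]
  simp only [u, Function.update_self, lpd_smul, lpd_lmon, smul_single', add_sub_cancel_right,
    Pi.add_apply, Pi.single_eq_same]
  rw [lmon, inv_mul_cancel₀ hc]

theorem ljac_lmon (v : Fin n → Fin n → ℤ) :
    ljac (fun j => lmon (K := K) (v j)) =
      single (∑ j, v j - 1) (Matrix.of fun i j => (v j i : K)).det := by
  set A := (algebraMap K (Laurent K n)).mapMatrix (Matrix.of fun i j => (v j i : K))
  have hfactor : Matrix.of (fun i j => lpd i (lmon (K := K) (v j))) =
      Matrix.of fun i j =>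
        lmon (-Pi.single i 1) * Matrix.of (fun i j => lmon (v j) * A i j) i j := by
    refine Matrix.ext fun i j => ?_
    simp [A, lmon, lpd_single, coe_algebraMap, single_mul_single, sub_eq_neg_add]
  rw [ljac, hfactor, Matrix.det_mul_column, Matrix.det_mul_row, ← RingHom.map_det]
  simp only [lmon, prod_single, sum_neg_distrib, univ_sum_single, prod_const_one, coe_algebraMap,
    Algebra.algebraMap_self, RingHom.coe_id, Function.comp_apply, id_eq, single_mul_single,
    add_zero, one_mul]
  rw [neg_add_eq_sub]
  rfl

theorem coeff_ljac_lmon_neg_one [NeZero n] (v : Fin n → Fin n → ℤ) :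
    (ljac fun j => lmon (K := K) (v j)).coeff (fun _ => -1) = 0 := by
  rw [ljac_lmon, coeff_single, Finsupp.single_apply, ite_eq_right_iff]
  intro hdeg
  refine Matrix.det_eq_zero_of_sum_row_eq_zero fun i => ?_
  have hrow : ∑ j, v j i = 0 := by simpa using congrFun hdeg i
  simp only [Matrix.of_apply, ← Int.cast_sum, hrow, Int.cast_zero]

theorem coeff_ljac_neg_one [NeZero n] (u : Fin n → Laurent K n) :
    (ljac u).coeff (fun _ => -1) = 0 := by
  let φ : Laurent K n →ₗ[K] K :=
    Finsupp.lapply (fun _ => -1) ∘ₗ (coeffLinearEquiv K).toLinearMap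
  have hφ : φ.compMultilinearMap (ljacMultilinear K n) = 0 :=
    Module.Basis.ext_multilinear (fun _ => AddMonoidAlgebra.basis _ K) fun v => by
      simpa [φ, ljacMultilinear_apply, lmon] using coeff_ljac_lmon_neg_one v
  simpa [φ, ljacMultilinear_apply] using congr($hφ u)

theorem coeff_neg_one_eq_zero_of_mem_span_ljac [NeZero n] {f : Laurent K n}
    (hf : f ∈ Submodule.span K (Set.range ljac)) : f.coeff (fun _ => -1) = 0 := by
  induction hf using Submodule.span_induction with
  | mem _ h => obtain ⟨u, rfl⟩ := h; exact coeff_ljac_neg_one u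
  | zero => rfl
  | add _ _ _ _ hf hg => simp [hf, hg]
  | smul _ _ _ hf => simp [hf]

end Laurent

/-- On the Laurent polynomial algebra (char `K = 0`, `n ≥ 1`): (1) `x^{−θ}` is not in the
`K`-span of the Jacobian values; (2) every other monomial `x^β` (β ≠ −θ) is; in fact, if
`β_i ≠ −1` then `x^β = Jac_n^S(x_1,…,x_{i−1},(β_i+1)^{−1}x^{β+ε_i},x_{i+1},…,x_n)`. -/
theorem laurent_jacobian_span {K : Type*} [Field K] [CharZero K] {n : ℕ} (hn : 1 ≤ n) :
    ((lmon (K := K) (fun _ : Fin n => (-1 : ℤ))) ∉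
      Submodule.span K (Set.range fun u : Fin n → Laurent K n => ljac u)) ∧
    (∀ β : Fin n → ℤ, β ≠ (fun _ => (-1 : ℤ)) →
      lmon (K := K) β ∈ Submodule.span K (Set.range fun u : Fin n → Laurent K n => ljac u)) ∧
    (∀ (β : Fin n → ℤ) (i : Fin n), β i ≠ -1 →
      lmon (K := K) β = ljac (Function.update (fun j : Fin n => lmon (Pi.single j 1)) i
        ((((β i + 1 : ℤ) : K))⁻¹ • lmon (β + Pi.single i 1)))) := by
  have : NeZero n := ⟨by omega⟩
  refine ⟨fun hmem => ?_, fun β hβ => ?_, lmon_eq_ljac_update⟩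
  · simpa [lmon] using coeff_neg_one_eq_zero_of_mem_span_ljac hmem
  · obtain ⟨i, hi⟩ : ∃ i, β i ≠ -1 := not_forall.mp fun h => hβ (funext h)
    rw [lmon_eq_ljac_update β i hi]
    exact Submodule.subset_span ⟨_, rfl⟩
end
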